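/- arXiv:1007.3606 — 6 statements merged into one kernel-verified Lean document; each statement's English description precedes it below -/
import Mathlib

section
/- Maximum principle for holomorphic discs with boundary on the pseudoconvex sphere S³ (boundary part): let u be a smooth holomorphic disc with boundary on S³. Then for every z with |z| = 1 one has Re ⟪u(z), z·u′(z)⟫ > 0. In particular u′(z) ≠ 0 for |z| = 1, so the boundary curve θ ↦ u(e^{iθ}) is an immersion, and it is positively transverse to the standard contact structure ξ = ker α on S³, since the standard contact form α = (1/2)(x₁dy₁ − y₁dx₁ + x₂dy₂ − y₂dx₂) evaluates on the tangent vector ∂_θ u(e^{iθ}) = i e^{iθ} u′(e^{iθ}) to (1/2)·Re ⟪u(e^{iθ}), e^{iθ}·u′(e^{iθ})⟫ > 0. -/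
open Metric Complex Filter Topology

section AuxLemmas

private lemma aux_cs {a₁ a₂ b₁ b₂ : ℂ} (ha : ‖a₁‖ ^ 2 + ‖a₂‖ ^ 2 = 1)
    (hb : ‖b₁‖ ^ 2 + ‖b₂‖ ^ 2 = 1) :
    ‖(starRingEnd ℂ) a₁ * b₁ + (starRingEnd ℂ) a₂ * b₂‖ ≤ 1 := by
  calc ‖(starRingEnd ℂ) a₁ * b₁ + (starRingEnd ℂ) a₂ * b₂‖
      ≤ ‖(starRingEnd ℂ) a₁ * b₁‖ + ‖(starRingEnd ℂ) a₂ * b₂‖ :=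
        norm_add_le _ _
    _ = ‖a₁‖ * ‖b₁‖ + ‖a₂‖ * ‖b₂‖ := by
        simp [map_mul]
    _ ≤ 1 := by nlinarith [sq_nonneg (‖a₁‖ - ‖b₁‖),
        sq_nonneg (‖a₂‖ - ‖b₂‖)]

private lemma aux_eq {a₁ a₂ b₁ b₂ : ℂ} (ha : ‖a₁‖ ^ 2 + ‖a₂‖ ^ 2 = 1)
    (hb : ‖b₁‖ ^ 2 + ‖b₂‖ ^ 2 = 1)
    (h : (starRingEnd ℂ) a₁ * b₁ + (starRingEnd ℂ) a₂ * b₂ = 1) :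
    b₁ = a₁ ∧ b₂ = a₂ := by
  have h1 : ((starRingEnd ℂ) a₁ * b₁).re + ((starRingEnd ℂ) a₂ * b₂).re = 1 := by
    have := congrArg Complex.re h; simpa using this
  have e1 : ‖b₁ - a₁‖ ^ 2 = ‖b₁‖ ^ 2 + ‖a₁‖ ^ 2
      - 2 * ((starRingEnd ℂ) a₁ * b₁).re := by
    rw [Complex.sq_norm, Complex.sq_norm, Complex.sq_norm]
    simp [Complex.normSq_apply, Complex.mul_re, Complex.sub_re, Complex.sub_im]; ring
  have e2 : ‖b₂ - a₂‖ ^ 2 = ‖b₂‖ ^ 2 + ‖a₂‖ ^ 2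
      - 2 * ((starRingEnd ℂ) a₂ * b₂).re := by
    rw [Complex.sq_norm, Complex.sq_norm, Complex.sq_norm]
    simp [Complex.normSq_apply, Complex.mul_re, Complex.sub_re, Complex.sub_im]; ring
  have n1 : (0:ℝ) ≤ ‖b₁ - a₁‖ ^ 2 := sq_nonneg _
  have n2 : (0:ℝ) ≤ ‖b₂ - a₂‖ ^ 2 := sq_nonneg _
  have z1 : ‖b₁ - a₁‖ ^ 2 = 0 := by linarith
  have z2 : ‖b₂ - a₂‖ ^ 2 = 0 := by linarith
  constructor
  · have := pow_eq_zero_iff (n := 2) (by norm_num) |>.mp z1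
    exact sub_eq_zero.mp (norm_eq_zero.mp this)
  · have := pow_eq_zero_iff (n := 2) (by norm_num) |>.mp z2
    exact sub_eq_zero.mp (norm_eq_zero.mp this)

private lemma aux_den {c x : ℂ} (hc : ‖c‖ < 1) (hx : ‖x‖ ≤ 1) :
    ‖1 - (starRingEnd ℂ) c * x‖ > 0 := by
  have hd : ‖(starRingEnd ℂ) c * x‖ < 1 := by
    rw [norm_mul, Complex.norm_conj]
    nlinarith [norm_nonneg c, norm_nonneg x]
  have := norm_sub_norm_le (1:ℂ) ((starRingEnd ℂ) c * x)
  simp only [norm_one] at this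
  linarith

private lemma aux_mobius_lt {c x : ℂ} (hc : ‖c‖ < 1) (hx : ‖x‖ < 1) :
    ‖(x - c) / (1 - (starRingEnd ℂ) c * x)‖ < 1 := by
  have hden := aux_den hc hx.le
  rw [norm_div, div_lt_one hden]
  have key : ‖1 - (starRingEnd ℂ) c * x‖ ^ 2 - ‖x - c‖ ^ 2
      = (1 - ‖c‖ ^ 2) * (1 - ‖x‖ ^ 2) := by
    rw [Complex.sq_norm, Complex.sq_norm, Complex.sq_norm, Complex.sq_norm]
    simp [Complex.normSq_apply, Complex.mul_re, Complex.mul_im, Complex.sub_re, Complex.sub_im]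
    ring
  have p1 : (0:ℝ) < 1 - ‖c‖ ^ 2 := by nlinarith [norm_nonneg c]
  have p2 : (0:ℝ) < 1 - ‖x‖ ^ 2 := by nlinarith [norm_nonneg x]
  have hsq : ‖x - c‖ ^ 2 < ‖1 - (starRingEnd ℂ) c * x‖ ^ 2 := by
    nlinarith [mul_pos p1 p2]
  exact lt_of_pow_lt_pow_left₀ 2 (norm_nonneg _) hsq

private lemma aux_hopf {t a r s : ℝ} (ht : 0 ≤ t) (ha0 : 0 ≤ a) (ha : a < 1) (hr0 : 0 ≤ r)
    (hr : r < 1) (hs : s ≤ a * t)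
    (hkey : t^2 - 2*s + a^2 ≤ r^2 * (1 - 2*s + a^2 * t^2)) :
    t * (1 + a*r) ≤ a + r := by
  by_contra hcon
  push_neg at hcon
  have har : a * r < 1 := by nlinarith
  have h1r : (0:ℝ) < 1 - a*r := by linarith
  have h2r : (0:ℝ) < 1 + a*r := by nlinarith [mul_nonneg ha0 hr0]
  have f1 : 0 < t*(1+a*r) - (a+r) := by linarith
  have ha2 : (0:ℝ) ≤ 1 - a^2 := by nlinarith
  have hr2 : (0:ℝ) ≤ 1 - r^2 := by nlinarith
  have f2 : 0 < t*(1-a*r) - (a-r) := by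
    nlinarith [mul_pos f1 h1r, mul_nonneg hr0 ha2]
  have prod : (t*(1+a*r)-(a+r)) * (t*(1-a*r)-(a-r)) ≤ 0 := by
    nlinarith [mul_nonneg (sub_nonneg.mpr hs) hr2]
  nlinarith [mul_pos f1 f2]

private lemma aux_exp1 (c x : ℂ) : ‖x - c‖ ^ 2
    = ‖x‖ ^ 2 - 2 * ((starRingEnd ℂ) c * x).re + ‖c‖ ^ 2 := by
  rw [Complex.sq_norm, Complex.sq_norm, Complex.sq_norm]
  simp [Complex.normSq_apply, Complex.mul_re, Complex.sub_re, Complex.sub_im]; ring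

private lemma aux_exp2 (c x : ℂ) : ‖1 - (starRingEnd ℂ) c * x‖ ^ 2
    = 1 - 2 * ((starRingEnd ℂ) c * x).re + ‖c‖ ^ 2 * ‖x‖ ^ 2 := by
  rw [Complex.sq_norm, Complex.sq_norm, Complex.sq_norm]
  simp [Complex.normSq_apply, Complex.mul_re, Complex.mul_im, Complex.sub_re, Complex.sub_im]; ring

private lemma aux_cr {u : ℂ → ℂ × ℂ} {V : Set ℂ} (hVo : IsOpen V)
    (hVs : closedBall (0:ℂ) 1 ⊆ V)
    (hsm : ContDiffOn ℝ (⊤ : ℕ∞) u V) (hdiff : DifferentiableOn ℂ u (ball (0:ℂ) 1))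
    {z₀ : ℂ} (hz₀ : ‖z₀‖ = 1) :
    fderiv ℝ u z₀ z₀ = z₀ • fderiv ℝ u z₀ 1 := by
  set g : ℂ → ℂ × ℂ := fun z => fderiv ℝ u z z₀ - z₀ • fderiv ℝ u z 1 with hg
  have hball : ∀ z ∈ ball (0:ℂ) 1, g z = 0 := by
    intro z hz
    have hd : DifferentiableAt ℂ u z := hdiff.differentiableAt (isOpen_ball.mem_nhds hz)
    have hre : fderiv ℝ u z = (fderiv ℂ u z).restrictScalars ℝ := hd.fderiv_restrictScalars ℝ
    simp only [hg, hre, ContinuousLinearMap.coe_restrictScalars']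
    have : fderiv ℂ u z z₀ = z₀ • fderiv ℂ u z 1 := by
      rw [← map_smul]; norm_num
    rw [this]; simp
  have hcd : ContinuousOn (fun z => fderiv ℝ u z) V :=
    hsm.continuousOn_fderiv_of_isOpen hVo (by norm_num)
  have hcg : ContinuousOn g V := by
    apply ContinuousOn.sub
    · exact (ContinuousLinearMap.apply ℝ (ℂ × ℂ) z₀).continuous.comp_continuousOn hcd
    · exact ((ContinuousLinearMap.apply ℝ (ℂ × ℂ) 1).continuous.comp_continuousOn hcd).const_smul z₀
  have hz₀V : z₀ ∈ V := hVs (by simp [mem_closedBall, dist_zero_right, hz₀])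
  have hclos : z₀ ∈ closure (ball (0:ℂ) 1) := by
    rw [closure_ball (0:ℂ) one_ne_zero]
    simp [mem_closedBall, dist_zero_right, hz₀]
  have hne : (𝓝[ball (0:ℂ) 1] z₀).NeBot := mem_closure_iff_nhdsWithin_neBot.mp hclos
  have t1 : Tendsto g (𝓝[ball (0:ℂ) 1] z₀) (𝓝 (g z₀)) :=
    ((hcg.continuousAt (hVo.mem_nhds hz₀V)).tendsto).mono_left nhdsWithin_le_nhds
  have t2 : Tendsto g (𝓝[ball (0:ℂ) 1] z₀) (𝓝 0) := by
    refine Tendsto.congr' ?_ tendsto_const_nhds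
    exact (eventually_nhdsWithin_of_forall fun z hz => (hball z hz).symm)
  have := tendsto_nhds_unique t1 t2
  rw [hg] at this
  exact sub_eq_zero.mp this

private lemma aux_strict {f : ℂ → ℂ} (hfdc : DiffContOnCl ℂ f (ball (0:ℂ) 1))
    (hle : ∀ z ∈ closedBall (0:ℂ) 1, ‖f z‖ ≤ 1)
    {z₀ : ℂ} (hz₀ : ‖z₀‖ = 1) (hfz₀ : f z₀ = 1)
    (hconst : ¬ ∀ z ∈ closedBall (0:ℂ) 1, f z = 1) :
    ∀ w ∈ ball (0:ℂ) 1, ‖f w‖ < 1 := by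
  intro w hw
  rcases lt_or_eq_of_le (hle w (ball_subset_closedBall hw)) with h | h
  · exact h
  · exfalso
    have hmax : IsMaxOn (norm ∘ f) (ball (0:ℂ) 1) w := by
      intro x hx
      simp only [Function.comp_apply, Set.mem_setOf_eq]
      rw [h]
      exact hle x (ball_subset_closedBall hx)
    have heq := Complex.eqOn_closure_of_isPreconnected_of_isMaxOn_norm
      (convex_ball (0:ℂ) 1).isPreconnected isOpen_ball hfdc hw hmax
    rw [closure_ball (0:ℂ) one_ne_zero] at heq
    have hz₀m : z₀ ∈ closedBall (0:ℂ) 1 := by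
      simp [mem_closedBall, dist_zero_right, hz₀]
    have hfw : f w = 1 := by
      have := heq hz₀m
      simp only [Function.const_apply] at this
      rw [hfz₀] at this; exact this.symm
    exact hconst fun z hz => by
      have h2 := heq hz; simp only [Function.const_apply] at h2; rw [h2]; exact hfw

private lemma aux_deriv {u : ℂ → ℂ × ℂ} {V : Set ℂ} (hVo : IsOpen V) {z₀ : ℂ} (hz₀V : z₀ ∈ V)
    (hsm : ContDiffOn ℝ (⊤ : ℕ∞) u V) (a : ℂ × ℂ) :
    HasDerivAt (fun r : ℝ =>
        ((starRingEnd ℂ) a.1 * (u ((r:ℂ)*z₀)).1 + (starRingEnd ℂ) a.2 * (u ((r:ℂ)*z₀)).2).re)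
      (((starRingEnd ℂ) a.1 * (fderiv ℝ u z₀ z₀).1
        + (starRingEnd ℂ) a.2 * (fderiv ℝ u z₀ z₀).2).re) 1 := by
  have hud : DifferentiableAt ℝ u z₀ :=
    (hsm.contDiffAt (hVo.mem_nhds hz₀V)).differentiableAt (by simp)
  have hFD : HasFDerivAt u (fderiv ℝ u z₀) z₀ := hud.hasFDerivAt
  have hinner : HasDerivAt (fun r : ℝ => (r:ℂ)*z₀) z₀ 1 := by
    simpa using (Complex.ofRealCLM.hasDerivAt (x := (1:ℝ))).mul_const z₀
  have hγ : HasDerivAt (fun r : ℝ => u ((r:ℂ)*z₀)) (fderiv ℝ u z₀ z₀) 1 := by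
    have := hFD.comp_hasDerivAt_of_eq 1 hinner (by simp)
    exact this
  have h1 : HasDerivAt (fun r : ℝ => (u ((r:ℂ)*z₀)).1) (fderiv ℝ u z₀ z₀).1 1 := by
    exact (ContinuousLinearMap.fst ℝ ℂ ℂ).hasFDerivAt.comp_hasDerivAt 1 hγ
  have h2 : HasDerivAt (fun r : ℝ => (u ((r:ℂ)*z₀)).2) (fderiv ℝ u z₀ z₀).2 1 := by
    exact (ContinuousLinearMap.snd ℝ ℂ ℂ).hasFDerivAt.comp_hasDerivAt 1 hγ
  have hF : HasDerivAt (fun r : ℝ =>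
      (starRingEnd ℂ) a.1 * (u ((r:ℂ)*z₀)).1 + (starRingEnd ℂ) a.2 * (u ((r:ℂ)*z₀)).2)
      ((starRingEnd ℂ) a.1 * (fderiv ℝ u z₀ z₀).1
        + (starRingEnd ℂ) a.2 * (fderiv ℝ u z₀ z₀).2) 1 :=
    (h1.const_mul _).add (h2.const_mul _)
  have h := Complex.reCLM.hasFDerivAt.comp_hasDerivAt 1 hF
  simp only [Function.comp_def] at h
  simpa using h

end AuxLemmas

/-- A smooth holomorphic disc with boundary on a set `S ⊆ S³ ⊆ ℂ²`: a map `ℂ → ℂ²`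
which is `C^∞` on an open neighbourhood of the closed unit disc, holomorphic on the open
unit disc, nonconstant on the closed unit disc, and maps the unit circle into `S`. -/
def IsHolomorphicDisc (u : ℂ → ℂ × ℂ) (S : Set (ℂ × ℂ)) : Prop :=
  (∃ V : Set ℂ, IsOpen V ∧ closedBall (0 : ℂ) 1 ⊆ V ∧ ContDiffOn ℝ (⊤ : ℕ∞) u V) ∧
  DifferentiableOn ℂ u (ball (0 : ℂ) 1) ∧
  (¬ ∃ c : ℂ × ℂ, ∀ z ∈ closedBall (0 : ℂ) 1, u z = c) ∧
  ∀ z : ℂ, ‖z‖ = 1 → u z ∈ S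

/-- The derivative `u′ = ∂u/∂x` of a disc `u : ℂ → ℂ²`, i.e. the real total derivative
evaluated on the unit vector `1 ∈ ℂ`; on the open disc it agrees with the complex
derivative of a holomorphic `u`. -/
noncomputable def discDeriv (u : ℂ → ℂ × ℂ) (z : ℂ) : ℂ × ℂ :=
  fderiv ℝ u z 1

/-- Maximum principle for holomorphic discs with boundary on the strictly pseudoconvex
sphere `S³` (boundary part): if `u` is a smooth holomorphic disc with boundary on `S³`,
then `Re ⟪u(z), z·u′(z)⟫ > 0` for every `z` on the unit circle (Hermitian inner product,
conjugate-linear in the first slot); in particular `u′(z) ≠ 0` there, so the boundary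
curve is an immersion positively transverse to the standard contact structure. -/
theorem maximum_principle_boundary (u : ℂ → ℂ × ℂ)
    (hu : IsHolomorphicDisc u
      {p : ℂ × ℂ | ‖p.1‖ ^ 2 + ‖p.2‖ ^ 2 = 1}) :
    ∀ z : ℂ, ‖z‖ = 1 →
      0 < ((starRingEnd ℂ) (u z).1 * (z * (discDeriv u z).1) +
            (starRingEnd ℂ) (u z).2 * (z * (discDeriv u z).2)).re ∧
      discDeriv u z ≠ 0 := by
  obtain ⟨⟨V, hVo, hVs, hsm⟩, hdiff, hnc, hbd⟩ := hu
  intro z₀ hz₀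
  have hsphere : ∀ z : ℂ, ‖z‖ = 1 →
      ‖(u z).1‖ ^ 2 + ‖(u z).2‖ ^ 2 = 1 := hbd
  set a : ℂ × ℂ := u z₀ with ha_def
  have hz₀cb : z₀ ∈ closedBall (0:ℂ) 1 := by
    simp [mem_closedBall, dist_zero_right, hz₀]
  have hz₀V : z₀ ∈ V := hVs hz₀cb
  have ha : ‖a.1‖ ^ 2 + ‖a.2‖ ^ 2 = 1 := hsphere z₀ hz₀
  set f : ℂ → ℂ := fun z => (starRingEnd ℂ) a.1 * (u z).1 + (starRingEnd ℂ) a.2 * (u z).2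
    with hf_def
  have hucont : ContinuousOn u (closedBall (0:ℂ) 1) := (hsm.mono hVs).continuousOn
  have hfd : DifferentiableOn ℂ f (ball (0:ℂ) 1) :=
    ((hdiff.fst).const_mul _).add ((hdiff.snd).const_mul _)
  have hfc : ContinuousOn f (closedBall (0:ℂ) 1) :=
    (continuousOn_const.mul hucont.fst).add (continuousOn_const.mul hucont.snd)
  have hfdc : DiffContOnCl ℂ f (ball (0:ℂ) 1) :=
    ⟨hfd, by rwa [closure_ball (0:ℂ) one_ne_zero]⟩
  have hfront : frontier (ball (0:ℂ) 1) = sphere (0:ℂ) 1 := frontier_ball (0:ℂ) one_ne_zero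
  have hf_le : ∀ z ∈ closedBall (0:ℂ) 1, ‖f z‖ ≤ 1 := by
    intro z hz
    have hzc : z ∈ closure (ball (0:ℂ) 1) := by rwa [closure_ball (0:ℂ) one_ne_zero]
    have key := Complex.norm_le_of_forall_mem_frontier_norm_le isBounded_ball hfdc (C := 1)
      (fun w hw => by
        rw [hfront] at hw
        have hw1 : ‖w‖ = 1 := by
          simpa using mem_sphere_zero_iff_norm.mp hw
        simpa using aux_cs ha (hsphere w hw1)) hzc
    simpa using key
  have hmulconj : ∀ w : ℂ, (starRingEnd ℂ) w * w = ((‖w‖ ^ 2 : ℝ) : ℂ) := fun w => by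
    rw [mul_comm, Complex.mul_conj, Complex.sq_norm]
  have hfz₀ : f z₀ = 1 := by
    rw [hf_def]
    simp only [← ha_def]
    rw [hmulconj, hmulconj, ← Complex.ofReal_add, ha]
    norm_num
  have hconst : ¬ ∀ z ∈ closedBall (0:ℂ) 1, f z = 1 := by
    intro hc
    apply hnc
    refine ⟨a, ?_⟩
    have hbdeq : ∀ z ∈ sphere (0:ℂ) 1, u z = a := by
      intro z hzs
      have hz1 : ‖z‖ = 1 := by
        simpa using mem_sphere_zero_iff_norm.mp hzs
      have := aux_eq ha (hsphere z hz1) (hc z (sphere_subset_closedBall hzs))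
      exact Prod.ext this.1 this.2
    intro z hz
    have hzc : z ∈ closure (ball (0:ℂ) 1) := by rwa [closure_ball (0:ℂ) one_ne_zero]
    have hdca : DiffContOnCl ℂ (fun w => u w - a) (ball (0:ℂ) 1) :=
      ⟨hdiff.sub_const a, by
        rw [closure_ball (0:ℂ) one_ne_zero]; exact hucont.sub continuousOn_const⟩
    have key := Complex.norm_le_of_forall_mem_frontier_norm_le isBounded_ball hdca (C := 0)
      (fun w hw => by
        rw [hfront] at hw
        simp [hbdeq w hw]) hzc
    have : u z - a = 0 := by simpa using norm_le_zero_iff.mp key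
    exact sub_eq_zero.mp this
  have hstrict := aux_strict hfdc hf_le hz₀ hfz₀ hconst
  have ha' : ‖f 0‖ < 1 := hstrict 0 (mem_ball_self one_pos)
  set c : ℂ := f 0 with hc_def
  have hdenne : ∀ w ∈ closedBall (0:ℂ) 1, (1 - (starRingEnd ℂ) c * f w) ≠ 0 := by
    intro w hw h
    have := aux_den ha' (hf_le w hw)
    rw [h] at this; simp at this
  set h : ℂ → ℂ := fun w => (f w - c) / (1 - (starRingEnd ℂ) c * f w) with hh_def
  have hdh : DifferentiableOn ℂ h (ball (0:ℂ) 1) :=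
    (hfd.sub_const c).div ((differentiableOn_const 1).sub (hfd.const_mul _))
      (fun w hw => hdenne w (ball_subset_closedBall hw))
  have hmaps : Set.MapsTo h (ball (0:ℂ) 1) (ball (0:ℂ) 1) := by
    intro w hw
    rw [mem_ball_zero_iff]
    exact aux_mobius_lt ha' (hstrict w hw)
  have h0 : h 0 = 0 := by simp [hh_def, ← hc_def]
  have hschwarz : ∀ r : ℝ, 0 ≤ r → r < 1 →
      ‖f ((r:ℂ)*z₀) - c‖
        ≤ r * ‖1 - (starRingEnd ℂ) c * f ((r:ℂ)*z₀)‖ := by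
    intro r hr0 hr1
    have habsz : ‖(r:ℂ)*z₀‖ = r := by
      rw [norm_mul, hz₀, Complex.norm_real, Real.norm_eq_abs, _root_.abs_of_nonneg hr0, mul_one]
    have hballm : ‖(r:ℂ)*z₀‖ < 1 := by rw [habsz]; exact hr1
    have hs := Complex.norm_le_norm_of_mapsTo_ball hdh (hmaps.mono_right ball_subset_closedBall) h0 hballm
    rw [habsz] at hs
    have hmem : (r:ℂ)*z₀ ∈ closedBall (0:ℂ) 1 := by
      simp only [mem_closedBall, dist_zero_right, habsz]; linarith
    have hden := aux_den ha' (hf_le _ hmem)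
    rw [hh_def] at hs
    simp only at hs
    rw [norm_div, div_le_iff₀ hden] at hs
    exact hs
  have hbound : ∀ r : ℝ, 0 ≤ r → r < 1 →
      (1 - ‖c‖)/2 * (1 - r) ≤ 1 - (f ((r:ℂ)*z₀)).re := by
    intro r hr0 hr1
    have habsz : ‖(r:ℂ)*z₀‖ = r := by
      rw [norm_mul, hz₀, Complex.norm_real, Real.norm_eq_abs, _root_.abs_of_nonneg hr0, mul_one]
    have hmem : (r:ℂ)*z₀ ∈ closedBall (0:ℂ) 1 := by
      simp only [mem_closedBall, dist_zero_right, habsz]; linarith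
    set x : ℂ := f ((r:ℂ)*z₀) with hx_def
    have hx1 : ‖x‖ ≤ 1 := hf_le _ hmem
    have hsq : ‖x - c‖ ^ 2
        ≤ r^2 * ‖1 - (starRingEnd ℂ) c * x‖ ^ 2 := by
      have hs := hschwarz r hr0 hr1
      rw [← hx_def] at hs
      nlinarith [norm_nonneg (x - c), norm_nonneg (1 - (starRingEnd ℂ) c * x)]
    rw [aux_exp1, aux_exp2] at hsq
    have hs_le : ((starRingEnd ℂ) c * x).re ≤ ‖c‖ * ‖x‖ := by
      calc ((starRingEnd ℂ) c * x).re ≤ ‖(starRingEnd ℂ) c * x‖ :=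
            Complex.re_le_norm _
        _ = ‖c‖ * ‖x‖ := by rw [norm_mul, Complex.norm_conj]
    have ht := aux_hopf (norm_nonneg x) (norm_nonneg c) ha' hr0 hr1 hs_le
      (by linarith)
    have hre : x.re ≤ ‖x‖ := Complex.re_le_norm x
    have har : ‖c‖ * r ≤ 1 :=
      le_of_lt (by nlinarith [norm_nonneg c])
    nlinarith [mul_nonneg (sub_nonneg.mpr hx1) (sub_nonneg.mpr har),
      mul_nonneg (norm_nonneg c) hr0]
  -- derivative along the radius
  have hD := aux_deriv hVo hz₀V hsm a
  have hslope := hasDerivAt_iff_tendsto_slope.mp hD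
  have hmono : 𝓝[<] (1:ℝ) ≤ 𝓝[≠] (1:ℝ) :=
    nhdsWithin_mono 1 fun x hx => ne_of_lt hx
  have hslope' := hslope.mono_left hmono
  set D := ((starRingEnd ℂ) a.1 * (fderiv ℝ u z₀ z₀).1
    + (starRingEnd ℂ) a.2 * (fderiv ℝ u z₀ z₀).2).re with hD_def
  set φ : ℝ → ℝ := fun r =>
    ((starRingEnd ℂ) a.1 * (u ((r:ℂ)*z₀)).1 + (starRingEnd ℂ) a.2 * (u ((r:ℂ)*z₀)).2).re
    with hφ_def
  have hφf : ∀ r : ℝ, φ r = (f ((r:ℂ)*z₀)).re := fun r => rfl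
  have hev : ∀ᶠ r in 𝓝[<] (1:ℝ), (1 - ‖c‖)/2 ≤ slope φ 1 r := by
    filter_upwards [Ioo_mem_nhdsLT_of_mem (Set.mem_Ioc.mpr ⟨zero_lt_one, le_refl 1⟩)] with r hr
    obtain ⟨hr0, hr1⟩ := hr
    have hb := hbound r hr0.le hr1
    have hφ1 : φ 1 = 1 := by
      rw [hφf]
      have : ((1:ℝ):ℂ)*z₀ = z₀ := by norm_num
      rw [this, hfz₀]; norm_num
    rw [slope_def_field, hφ1, hφf]
    have hne1 : (0:ℝ) < 1 - r := by linarith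
    rw [show ((f ((r:ℂ)*z₀)).re - 1) = -(1 - (f ((r:ℂ)*z₀)).re) by ring,
      show (r - 1) = -(1 - r) by ring, neg_div_neg_eq]
    rw [le_div_iff₀ hne1]
    linarith
  have hDge : (1 - ‖c‖)/2 ≤ D := ge_of_tendsto hslope' hev
  have hkpos : (0:ℝ) < (1 - ‖c‖)/2 := by linarith
  have hkey := aux_cr hVo hVs hsm hdiff hz₀
  have hDeq : D = ((starRingEnd ℂ) a.1 * (z₀ * (discDeriv u z₀).1) +
      (starRingEnd ℂ) a.2 * (z₀ * (discDeriv u z₀).2)).re := by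
    rw [hD_def, hkey]
    simp [discDeriv, Prod.smul_fst, Prod.smul_snd, smul_eq_mul]
  have hpos : 0 < ((starRingEnd ℂ) a.1 * (z₀ * (discDeriv u z₀).1) +
      (starRingEnd ℂ) a.2 * (z₀ * (discDeriv u z₀).2)).re := by
    rw [← hDeq]; linarith
  refine ⟨hpos, ?_⟩
  intro hzero
  rw [hzero] at hpos
  simp at hpos
end

section
/- Simplicity criterion for holomorphic discs: let n ≥ 1 and let u : ℂ → ℂⁿ be continuous on the closed unit disc 𝔻 and holomorphic on the open unit disc. Suppose that the restriction of u to the unit circle is injective and that no point of the open unit disc is mapped by u into u(∂𝔻), i.e. u({|z| < 1}) ∩ u({|z| = 1}) = ∅. Then u is simple: there do not exist two disjoint nonempty relatively open subsets U, V of 𝔻 with u(U) = u(V). -/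
/-!
Call `(z, w)` an accumulation pair of the coincidence set `{(z', w') : u z' = u w'}` if it is a
limit of coincidence pairs with `z' ≠ z`. The boundary hypotheses push every off-diagonal
coincidence pair into the open disc, and `U`, `V` provide an off-diagonal accumulation pair, so
the compact set of accumulation pairs contains a pair `q` maximising `|z - w|`. Through `q` the
coincidence set contains a holomorphic curve `s ↦ (α s, β s)` of accumulation pairs (from the
local normal forms `f = φ ^ a`, `f = ψ ^ b` of a coordinate of `u` and a pigeonhole over the
`a`-th roots of unity). By the maximum modulus principle `α - β` is the constant
`c = q.1 - q.2`, so `u x = u (x - c)` near `q.1`, hence on the whole lens of points `x` with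
`x` and `x - c` in the open disc. Letting `x` tend to the boundary point `c / |c|` of the lens
produces a point of the circle whose value is also taken in the open disc.
-/

open Metric

/-- A subset of the closed unit disc `𝔻 ⊆ ℂ` which is relatively open in `𝔻`. -/
def IsRelOpenInDisc (U : Set ℂ) : Prop :=
  U ⊆ closedBall (0 : ℂ) 1 ∧ ∃ O : Set ℂ, IsOpen O ∧ U = O ∩ closedBall (0 : ℂ) 1

/-- A map `u` defined on the closed unit disc is *simple* if there do not exist two
disjoint nonempty relatively open subsets `U, V` of `𝔻` with `u(U) = u(V)`. -/
def IsSimpleDisc {n : ℕ} (u : ℂ → (Fin n → ℂ)) : Prop :=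
  ¬ ∃ U V : Set ℂ, IsRelOpenInDisc U ∧ IsRelOpenInDisc V ∧
      U.Nonempty ∧ V.Nonempty ∧ Disjoint U V ∧ u '' U = u '' V

open Filter Set
open scoped Topology

variable {E : Type*} [NormedAddCommGroup E] [NormedSpace ℂ E]

theorem AnalyticAt.exists_pow_eq {g : ℂ → ℂ} {z₀ : ℂ} (hg : AnalyticAt ℂ g z₀) (hg₀ : g z₀ ≠ 0)
    {a : ℕ} (ha : a ≠ 0) : ∃ h : ℂ → ℂ, AnalyticAt ℂ h z₀ ∧ h z₀ ≠ 0 ∧ ∀ z, h z ^ a = g z := by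
  -- normalising by `g z₀` keeps the branch of `x ↦ x ^ (1 / a)` away from its cut near `z₀`
  set h : ℂ → ℂ := fun z => g z₀ ^ (a⁻¹ : ℂ) * (g z / g z₀) ^ (a⁻¹ : ℂ)
  have hpow : ∀ z, h z ^ a = g z := fun z => by
    simp only [h, mul_pow, Complex.cpow_nat_inv_pow _ ha, mul_div_cancel₀ _ hg₀]
  refine ⟨h, analyticAt_const.mul ((hg.div analyticAt_const hg₀).cpow analyticAt_const ?_),
    fun h₀ => hg₀ ?_, hpow⟩
  · simp [div_self hg₀]
  · rw [← hpow, h₀, zero_pow ha]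

theorem AnalyticAt.exists_eventuallyEq_add_pow {f : ℂ → ℂ} {z₀ : ℂ} (hf : AnalyticAt ℂ f z₀)
    (hnc : ¬ EventuallyConst f (𝓝 z₀)) :
    ∃ a ≠ 0, ∃ φ : ℂ → ℂ, AnalyticAt ℂ φ z₀ ∧ φ z₀ = 0 ∧ deriv φ z₀ ≠ 0 ∧
      ∀ᶠ z in 𝓝 z₀, f z = f z₀ + φ z ^ a := by
  have hf₀ : AnalyticAt ℂ (f · - f z₀) z₀ := hf.sub analyticAt_const
  have htop : analyticOrderAt (f · - f z₀) z₀ ≠ ⊤ :=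
    fun h => hnc (eventuallyConst_iff_analyticOrderAt_sub_eq_top.2 h)
  set a := analyticOrderNatAt (f · - f z₀) z₀
  have ha : analyticOrderAt (f · - f z₀) z₀ = a := (Nat.cast_analyticOrderNatAt htop).symm
  have ha₀ : a ≠ 0 := by
    have := analyticOrderAt_ne_zero.2 ⟨hf₀, sub_self (f z₀)⟩
    rw [ha] at this
    exact_mod_cast this
  obtain ⟨g, hg, hg₀, hfg⟩ := hf₀.analyticOrderAt_eq_natCast.1 ha
  obtain ⟨h, hh, hh₀, hpow⟩ := hg.exists_pow_eq hg₀ ha₀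
  have hderiv : HasDerivAt (fun z => (z - z₀) * h z) (h z₀) z₀ := by
    simpa using ((hasDerivAt_id z₀).sub_const z₀).fun_mul hh.differentiableAt.hasDerivAt
  refine ⟨a, ha₀, fun z => (z - z₀) * h z, (analyticAt_id.sub analyticAt_const).mul hh,
    by simp, hderiv.deriv ▸ hh₀, ?_⟩
  filter_upwards [hfg] with z hz
  rw [mul_pow, hpow, ← smul_eq_mul, ← hz]
  ring

theorem AnalyticAt.exists_pow_chart {f : ℂ → ℂ} {z₀ : ℂ} (hf : AnalyticAt ℂ f z₀)
    (hnc : ¬ EventuallyConst f (𝓝 z₀)) :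
    ∃ a ≠ 0, ∃ φ Φ : ℂ → ℂ, ContinuousAt φ z₀ ∧ φ z₀ = 0 ∧ AnalyticAt ℂ Φ 0 ∧ Φ 0 = z₀ ∧
      ∀ᶠ z in 𝓝 z₀, Φ (φ z) = z ∧ f z = f z₀ + φ z ^ a := by
  obtain ⟨a, ha, φ, hφ, hφ₀, hφ', hfφ⟩ := hf.exists_eventuallyEq_add_pow hnc
  have hΦ := hφ.analyticAt_localInverse hφ'
  rw [hφ₀] at hΦ
  refine ⟨a, ha, φ, _, hφ.continuousAt, hφ₀, hΦ, ?_,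
    (hφ.hasStrictDerivAt.eventually_left_inverse hφ').and hfφ⟩
  have :=
    HasStrictFDerivAt.localInverse_apply_image (hφ.hasStrictDerivAt.hasStrictFDerivAt_equiv hφ')
  rwa [hφ₀] at this

theorem Filter.exists_frequently_eq_mul_of_pow_eq {ι : Type*} {l : Filter ι} [l.NeBot]
    {x y : ι → ℂ} {a : ℕ} (ha : a ≠ 0) (h : ∀ᶠ i in l, x i ^ a = y i ^ a) :
    ∃ c : ℂ, ∃ᶠ i in l, x i = c * y i := by
  have hroot : ∀ᶠ i in l, ∃ c ∈ (Polynomial.nthRoots a (1 : ℂ)).toFinset, x i = c * y i := by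
    filter_upwards [h] with i hi
    simp only [Multiset.mem_toFinset, Polynomial.mem_nthRoots (Nat.pos_of_ne_zero ha)]
    by_cases hy : y i = 0
    · refine ⟨1, one_pow a, ?_⟩
      rw [hy, zero_pow ha] at hi
      rw [hy, pow_eq_zero_iff ha |>.1 hi, mul_zero]
    · exact ⟨x i / y i, by rw [div_pow, hi, div_self (pow_ne_zero a hy)],
        (div_mul_cancel₀ _ hy).symm⟩
  obtain ⟨c, -, hc⟩ := (Finset.frequently_exists _).1 hroot.frequently
  exact ⟨c, hc⟩

theorem Complex.tendsto_cpow_nat_inv_nhds_zero {a : ℕ} (ha : a ≠ 0) :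
    Tendsto (fun x : ℂ => x ^ (a⁻¹ : ℂ)) (𝓝 0) (𝓝 0) := by
  simpa [Complex.zero_cpow (inv_ne_zero (Nat.cast_ne_zero.2 ha))] using
    (Complex.continuousAt_cpow_const_of_re_pos (z := 0) (w := (a⁻¹ : ℂ)) (Or.inl le_rfl)
      (by simp [Nat.pos_of_ne_zero ha])).tendsto

theorem exists_analytic_curve_frequently_mem {f : ℂ → ℂ} {z₀ w₀ : ℂ} (hfz : AnalyticAt ℂ f z₀)
    (hfw : AnalyticAt ℂ f w₀) (hcz : ¬ EventuallyConst f (𝓝 z₀))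
    (hcw : ¬ EventuallyConst f (𝓝 w₀)) {S : Set (ℂ × ℂ)}
    (hS : ∀ p ∈ S, f p.1 = f p.2 ∧ p.1 ≠ z₀) (hcl : (z₀, w₀) ∈ closure S) :
    ∃ α β : ℂ → ℂ, AnalyticAt ℂ α 0 ∧ AnalyticAt ℂ β 0 ∧ α 0 = z₀ ∧ β 0 = w₀ ∧
      ∃ᶠ s in 𝓝[≠] 0, (α s, β s) ∈ S := by
  set l := 𝓝[S] (z₀, w₀)
  have : l.NeBot := mem_closure_iff_nhdsWithin_neBot.1 hcl
  have h₁ : Tendsto Prod.fst l (𝓝 z₀) := continuous_fst.continuousWithinAt.tendsto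
  have h₂ : Tendsto Prod.snd l (𝓝 w₀) := continuous_snd.continuousWithinAt.tendsto
  have hSl : ∀ᶠ p in l, p ∈ S := self_mem_nhdsWithin
  have hfzw : f z₀ = f w₀ := tendsto_nhds_unique
    ((hfz.continuousAt.tendsto.comp h₁).congr' (hSl.mono fun p hp => (hS p hp).1))
    (hfw.continuousAt.tendsto.comp h₂)
  obtain ⟨a, ha, φ, Φ, -, hφ₀, hΦ, hΦ₀, hφ⟩ := hfz.exists_pow_chart hcz
  obtain ⟨b, hb, ψ, Ψ, hψ, hψ₀, hΨ, hΨ₀, hψ'⟩ := hfw.exists_pow_chart hcw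
  have hgood : ∀ᶠ p in l, p ∈ S ∧ Φ (φ p.1) = p.1 ∧ Ψ (ψ p.2) = p.2 ∧ φ p.1 ^ a = ψ p.2 ^ b := by
    filter_upwards [hSl, h₁.eventually hφ, h₂.eventually hψ'] with p hp ⟨hΦp, hfp⟩ ⟨hΨp, hfp'⟩
    refine ⟨hp, hΦp, hΨp, ?_⟩
    rw [← add_right_inj (f z₀), ← hfp, hfzw, ← hfp', (hS p hp).1]
  -- `φ p.1 ^ a = (t p ^ b) ^ a`, so `φ p.1 = c * t p ^ b` for an `a`-th root of unity `c`;
  -- some `c` serves for frequently many `p`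
  set t : ℂ × ℂ → ℂ := fun p => ψ p.2 ^ (a⁻¹ : ℂ)
  have hta : ∀ p, t p ^ a = ψ p.2 := fun p => Complex.cpow_nat_inv_pow _ ha
  have ht₀ : ∀ᶠ p in l, t p ≠ 0 := by
    filter_upwards [hgood] with p ⟨hp, hΦp, _, hpow⟩ ht
    rw [← hta, ht, zero_pow ha, zero_pow hb, pow_eq_zero_iff ha] at hpow
    exact (hS p hp).2 (by rw [← hΦp, hpow, hΦ₀])
  have ht : Tendsto t l (𝓝[≠] 0) := by
    refine tendsto_nhdsWithin_iff.2 ⟨?_, ht₀⟩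
    exact (Complex.tendsto_cpow_nat_inv_nhds_zero ha).comp (hψ₀ ▸ hψ.tendsto.comp h₂)
  obtain ⟨c, hc⟩ := exists_frequently_eq_mul_of_pow_eq ha (y := fun p => t p ^ b)
    (hgood.mono fun p hp => by rw [hp.2.2.2, ← hta, ← pow_mul, ← pow_mul, mul_comm])
  refine ⟨fun s => Φ (c * s ^ b), fun s => Ψ (s ^ a),
    hΦ.comp_of_eq (by fun_prop) (by simp [hb]), hΨ.comp_of_eq (by fun_prop) (by simp [ha]),
    by simp [hb, hΦ₀], by simp [ha, hΨ₀], ht.frequently ?_⟩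
  refine (hc.and_eventually hgood).mono fun p ⟨hcp, hp, hΦp, hΨp, _⟩ => ?_
  simpa only [hta, ← hcp, hΦp, hΨp] using hp

theorem AnalyticOnNhd.exists_eqOn_const_of_eventuallyConst {f : ℂ → E} {D : Set ℂ}
    (hf : AnalyticOnNhd ℂ f D) (hD : IsPreconnected D) {z : ℂ} (hz : z ∈ D)
    (h : EventuallyConst f (𝓝 z)) : ∃ c, EqOn f (fun _ => c) D := by
  obtain ⟨c, hc⟩ := eventuallyConst_iff_exists_eventuallyEq.1 h
  exact ⟨c, hf.eqOn_of_preconnected_of_eventuallyEq analyticOnNhd_const hD hz hc⟩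

theorem AnalyticAt.eventually_frequently_ne [CompleteSpace E] {f : ℂ → E} {z : ℂ}
    (hf : AnalyticAt ℂ f z) (hnc : ¬ EventuallyConst f (𝓝 z)) :
    ∀ᶠ s in 𝓝 z, ∃ᶠ s' in 𝓝[≠] s, f s' ≠ f s := by
  obtain ⟨r, hr, hfr⟩ := hf.exists_ball_analyticOnNhd
  filter_upwards [ball_mem_nhds z hr] with s hs
  refine (((hfr s hs).eventually_eq_or_eventually_ne analyticAt_const).resolve_left
    fun h => hnc ?_).frequently
  obtain ⟨c, hc⟩ := hfr.exists_eqOn_const_of_eventuallyConst (convex_ball z r).isPreconnected hs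
    (eventuallyConst_iff_exists_eventuallyEq.2 ⟨_, h⟩)
  exact eventuallyConst_iff_exists_eventuallyEq.2 ⟨c, eventually_of_mem (ball_mem_nhds z hr) hc⟩

theorem AnalyticOnNhd.exists_branch_of_mem_closure {u : ℂ → E} {D : Set ℂ}
    (hu : AnalyticOnNhd ℂ u D) (hD : IsPreconnected D) (hnc : ¬ ∃ c, EqOn u (fun _ => c) D)
    {z₀ w₀ : ℂ} (hz₀ : z₀ ∈ D) (hw₀ : w₀ ∈ D) {S : Set (ℂ × ℂ)}
    (hS : ∀ p ∈ S, u p.1 = u p.2 ∧ p.1 ≠ z₀) (hcl : (z₀, w₀) ∈ closure S) :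
    ∃ α β : ℂ → ℂ, AnalyticAt ℂ α 0 ∧ AnalyticAt ℂ β 0 ∧ α 0 = z₀ ∧ β 0 = w₀ ∧
      ¬ EventuallyConst α (𝓝 0) ∧ ∀ᶠ s in 𝓝 0, u (α s) = u (β s) := by
  obtain ⟨z₁, hz₁, hne⟩ : ∃ z₁ ∈ D, u z₁ ≠ u z₀ := by
    by_contra! h
    exact hnc ⟨u z₀, h⟩
  obtain ⟨ℓ, hℓ⟩ := SeparatingDual.exists_separating_of_ne (R := ℂ) hne
  have hf : AnalyticOnNhd ℂ (ℓ ∘ u) D := ℓ.comp_analyticOnNhd hu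
  have hfc : ∀ z ∈ D, ¬ EventuallyConst (ℓ ∘ u) (𝓝 z) := fun z hz h => by
    obtain ⟨c, hc⟩ := hf.exists_eqOn_const_of_eventuallyConst hD hz h
    exact hℓ ((hc hz₁).trans (hc hz₀).symm)
  obtain ⟨α, β, hα, hβ, hα₀, hβ₀, hαβ⟩ := exists_analytic_curve_frequently_mem (hf z₀ hz₀)
    (hf w₀ hw₀) (hfc z₀ hz₀) (hfc w₀ hw₀) (fun p hp => ⟨congrArg ℓ (hS p hp).1, (hS p hp).2⟩) hcl
  refine ⟨α, β, hα, hβ, hα₀, hβ₀, fun h => ?_, ?_⟩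
  · obtain ⟨c, hc⟩ := eventuallyConst_iff_exists_eventuallyEq.1 h
    have hc₀ : c = z₀ := hα₀ ▸ hc.self_of_nhds.symm
    obtain ⟨s, hs, hcs⟩ := (hαβ.and_eventually (nhdsWithin_le_nhds hc)).exists
    exact (hS _ hs).2 (hcs.trans hc₀)
  · have hG : AnalyticAt ℂ (fun s => u (α s) - u (β s)) 0 :=
      ((hu z₀ hz₀).comp_of_eq hα hα₀).sub ((hu w₀ hw₀).comp_of_eq hβ hβ₀)
    refine (hG.frequently_zero_iff_eventually_zero.1 ?_).mono fun s hs => sub_eq_zero.1 hs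
    exact hαβ.mono fun s hs => sub_eq_zero.2 (hS _ hs).1

section AccumulationPairs

variable {X Y : Type*} [TopologicalSpace X] [TopologicalSpace Y]

def accumulationPairs (C : Set (X × Y)) : Set (X × Y) :=
  {q | q ∈ closure (C ∩ {p | p.1 ≠ q.1})}

theorem accumulationPairs_subset {C : Set (X × Y)} (hC : IsClosed C) :
    accumulationPairs C ⊆ C :=
  fun _ hq => hC.closure_subset_iff.2 inter_subset_left hq

theorem isClosed_accumulationPairs {C : Set (X × Y)} (hC : IsClosed C) :
    IsClosed (accumulationPairs C) := by
  refine isClosed_of_closure_subset fun q hq => mem_closure_iff.2 fun o ho hqo => ?_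
  obtain ⟨q', hq'o, hq'⟩ := mem_closure_iff.1 hq o ho hqo
  by_cases h : q'.1 = q.1
  · exact mem_closure_iff.1 (h ▸ hq' : q' ∈ closure (C ∩ {p | p.1 ≠ q.1})) o ho hq'o
  · exact ⟨q', hq'o, accumulationPairs_subset hC hq', h⟩

def coincidencePairs {Z : Type*} (u : X → Z) (K : Set X) : Set (X × X) :=
  {p | p.1 ∈ K ∧ p.2 ∈ K ∧ u p.1 = u p.2}

theorem isClosed_coincidencePairs {Z : Type*} [TopologicalSpace Z] [T2Space Z] {u : X → Z}
    {K : Set X} (hK : IsClosed K) (hu : ContinuousOn u K) :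
    IsClosed (coincidencePairs u K) := by
  have : coincidencePairs u K = K ×ˢ K ∩ (fun p => (u p.1, u p.2)) ⁻¹' diagonal Z := by
    ext; simp [coincidencePairs, and_assoc]
  rw [this]
  exact ((hu.comp continuousOn_fst fun _ hp => hp.1).prodMk
    (hu.comp continuousOn_snd fun _ hp => hp.2)).preimage_isClosed_of_isClosed (hK.prod hK)
    isClosed_diagonal

end AccumulationPairs

theorem eventually_mem_accumulationPairs [CompleteSpace E] {F : Type*} [NormedAddCommGroup F]
    [NormedSpace ℂ F] [CompleteSpace F]
    {α : ℂ → E} {β : ℂ → F} {C : Set (E × F)} {z : ℂ} (hα : AnalyticAt ℂ α z)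
    (hβ : AnalyticAt ℂ β z) (hαc : ¬ EventuallyConst α (𝓝 z))
    (hC : ∀ᶠ s in 𝓝 z, (α s, β s) ∈ C) : ∀ᶠ s in 𝓝 z, (α s, β s) ∈ accumulationPairs C := by
  filter_upwards [hα.eventually_frequently_ne hαc, hα.eventually_analyticAt,
    hβ.eventually_analyticAt, hC.eventually_nhds] with s hne hαs hβs hCs
  exact mem_closure_of_frequently_of_tendsto
    ((hne.and_eventually (nhdsWithin_le_nhds hCs)).mono fun _ h => ⟨h.2, h.1⟩)
    ((hαs.continuousAt.prodMk hβs.continuousAt).tendsto.mono_left nhdsWithin_le_nhds)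

theorem eventually_apply_eq_apply_sub_of_isMaxOn_dist {u : ℂ → E} {D K : Set ℂ} (hDo : IsOpen D)
    (hD : IsPreconnected D) (hDK : D ⊆ K) (hu : AnalyticOnNhd ℂ u D)
    (hnc : ¬ ∃ c, EqOn u (fun _ => c) D) {q : ℂ × ℂ} (hq₁ : q.1 ∈ D) (hq₂ : q.2 ∈ D)
    (hqA : q ∈ accumulationPairs (coincidencePairs u K))
    (hmax : IsMaxOn (fun p => dist p.1 p.2) (accumulationPairs (coincidencePairs u K)) q) :
    ∀ᶠ x in 𝓝 q.1, u x = u (x - (q.1 - q.2)) := by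
  obtain ⟨α, β, hα, hβ, hα₀, hβ₀, hαc, huαβ⟩ :=
    hu.exists_branch_of_mem_closure hD hnc hq₁ hq₂ (fun p hp => ⟨hp.1.2.2, hp.2⟩) hqA
  have hαD : ∀ᶠ s in 𝓝 0, α s ∈ D := hα.continuousAt.preimage_mem_nhds (hα₀ ▸ hDo.mem_nhds hq₁)
  have hβD : ∀ᶠ s in 𝓝 0, β s ∈ D := hβ.continuousAt.preimage_mem_nhds (hβ₀ ▸ hDo.mem_nhds hq₂)
  have hA := eventually_mem_accumulationPairs (C := coincidencePairs u K) hα hβ hαc <| by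
    filter_upwards [hαD, hβD, huαβ] with s h₁ h₂ h₃ using ⟨hDK h₁, hDK h₂, h₃⟩
  have hlocmax : IsLocalMax (norm ∘ fun s => α s - β s) 0 :=
    hA.mono fun s hs => by simpa [dist_eq_norm, hα₀, hβ₀] using hmax hs
  have hconst : ∀ᶠ s in 𝓝 0, α s - β s = q.1 - q.2 := by
    simpa [hα₀, hβ₀] using Complex.eventually_eq_of_isLocalMax_norm
      ((hα.sub hβ).eventually_analyticAt.mono fun s hs => hs.differentiableAt) hlocmax
  have hopen : 𝓝 q.1 ≤ map α (𝓝 0) :=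
    hα₀ ▸ hα.eventually_constant_or_nhds_le_map_nhds.resolve_left
      fun h => hαc (eventuallyConst_iff_exists_eventuallyEq.2 ⟨_, h⟩)
  refine hopen (mem_map.2 ?_)
  filter_upwards [huαβ, hconst] with s h₁ h₂
  change u (α s) = u (α s - (q.1 - q.2))
  rw [h₁, ← h₂, sub_sub_cancel]

theorem mem_ball_of_apply_eq_of_ne {Z : Type*} {u : ℂ → Z} (hinj : InjOn u (sphere (0 : ℂ) 1))
    (hint : Disjoint (u '' ball (0 : ℂ) 1) (u '' sphere (0 : ℂ) 1)) {z w : ℂ}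
    (hz : z ∈ closedBall (0 : ℂ) 1) (hw : w ∈ closedBall (0 : ℂ) 1) (huzw : u z = u w)
    (hzw : z ≠ w) : z ∈ ball (0 : ℂ) 1 ∧ w ∈ ball (0 : ℂ) 1 := by
  have hsep : ∀ {x y}, x ∈ ball (0 : ℂ) 1 → y ∈ sphere (0 : ℂ) 1 → u x ≠ u y :=
    fun hx hy h => disjoint_left.1 hint (mem_image_of_mem u hx) (h ▸ mem_image_of_mem u hy)
  rw [← ball_union_sphere] at hz hw
  rcases hz with hz | hz <;> rcases hw with hw | hw
  · exact ⟨hz, hw⟩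
  · exact absurd huzw (hsep hz hw)
  · exact absurd huzw.symm (hsep hw hz)
  · exact absurd (hinj hz hw huzw) hzw

theorem not_exists_eqOn_const_ball {Z : Type*} [TopologicalSpace Z] [T2Space Z] {u : ℂ → Z}
    (hcont : ContinuousOn u (closedBall (0 : ℂ) 1))
    (hint : Disjoint (u '' ball (0 : ℂ) 1) (u '' sphere (0 : ℂ) 1)) :
    ¬ ∃ c, EqOn u (fun _ => c) (ball (0 : ℂ) 1) := by
  rintro ⟨c, hc⟩
  have hc' : EqOn u (fun _ => c) (closedBall (0 : ℂ) 1) :=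
    hc.of_subset_closure hcont continuousOn_const ball_subset_closedBall
      (closure_ball (0 : ℂ) one_ne_zero).ge
  have h₁ : (1 : ℂ) ∈ sphere (0 : ℂ) 1 := by simp
  exact disjoint_left.1 hint (mem_image_of_mem u (mem_ball_self one_pos))
    ⟨1, h₁, (hc' (sphere_subset_closedBall h₁)).trans (hc' (mem_closedBall_self zero_le_one)).symm⟩

theorem exists_mem_accumulationPairs_ne {Z : Type*} {u : ℂ → Z}
    (hinj : InjOn u (sphere (0 : ℂ) 1))
    (hint : Disjoint (u '' ball (0 : ℂ) 1) (u '' sphere (0 : ℂ) 1)) {U V : Set ℂ}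
    (hU : IsRelOpenInDisc U) (hVK : V ⊆ closedBall (0 : ℂ) 1) (hU₀ : U.Nonempty)
    (hUV : Disjoint U V) (himg : u '' U = u '' V) :
    ∃ p ∈ accumulationPairs (coincidencePairs u (closedBall (0 : ℂ) 1)), p.1 ≠ p.2 := by
  obtain ⟨hUK, O, hO, hUO⟩ := hU
  have hpartner : ∀ z ∈ U, ∃ w ∈ V, u w = u z := fun z hz =>
    (himg ▸ mem_image_of_mem u hz : u z ∈ u '' V)
  choose! w hwV hwu using hpartner
  have hUball : U ⊆ ball (0 : ℂ) 1 := fun z hz =>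
    (mem_ball_of_apply_eq_of_ne hinj hint (hUK hz) (hVK (hwV z hz)) (hwu z hz).symm
      fun h => disjoint_left.1 hUV hz (h ▸ hwV z hz)).1
  have hUopen : IsOpen U := by
    have : U = O ∩ ball (0 : ℂ) 1 := hUO ▸ Subset.antisymm
      (subset_inter inter_subset_left (hUO ▸ hUball))
      (inter_subset_inter_right O ball_subset_closedBall)
    exact this ▸ hO.inter isOpen_ball
  obtain ⟨z₀, hz₀⟩ := hU₀
  set C := coincidencePairs u (closedBall (0 : ℂ) 1)
  set g : ℂ → ℂ × ℂ := fun z => (z, w z)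
  have hg : ∀ᶠ z in 𝓝[≠] z₀, g z ∈ (C ∩ {p | p.1 ≠ z₀}) ∩ U ×ˢ V := by
    filter_upwards [nhdsWithin_le_nhds (hUopen.mem_nhds hz₀), self_mem_nhdsWithin] with z hz hne
    exact ⟨⟨⟨hUK hz, hVK (hwV z hz), (hwu z hz).symm⟩, hne⟩, hz, hwV z hz⟩
  obtain ⟨q, -, hq⟩ := (isCompact_closedBall (0 : ℂ) 1).prod (isCompact_closedBall (0 : ℂ) 1)
    |>.exists_mapClusterPt (tendsto_principal.2 (hg.mono fun z hz => ⟨hUK hz.2.1, hVK hz.2.2⟩))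
  have hq₁ : q.1 = z₀ := eq_of_nhds_neBot
    ((hq.continuousAt_comp continuous_fst.continuousAt).clusterPt.mono nhdsWithin_le_nhds)
  have hqcl : q ∈ closure ((C ∩ {p | p.1 ≠ z₀}) ∩ U ×ˢ V) :=
    mem_closure_iff_clusterPt.2 (hq.clusterPt.mono (tendsto_principal.2 hg))
  refine ⟨q, ?_, fun h => ?_⟩
  · change q ∈ closure (C ∩ {p | p.1 ≠ q.1})
    exact hq₁ ▸ closure_mono inter_subset_left hqcl
  · have hq₂ : q.2 ∈ closure V := by
      have := closure_mono (inter_subset_right (s := C ∩ {p | p.1 ≠ z₀})) hqcl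
      rw [closure_prod_eq] at this
      exact this.2
    exact disjoint_left.1 (hUV.closure_right hUopen) (h ▸ hq₁ ▸ hz₀) hq₂

theorem exists_sphere_apply_eq_apply_sub [CompleteSpace E] {u : ℂ → E}
    (hcont : ContinuousOn u (closedBall (0 : ℂ) 1)) (hu : AnalyticOnNhd ℂ u (ball (0 : ℂ) 1))
    {c x₀ : ℂ} (hc : c ≠ 0) (hx₀ : x₀ ∈ ball c 1 ∩ ball (0 : ℂ) 1)
    (h : ∀ᶠ x in 𝓝 x₀, u x = u (x - c)) :
    ∃ ζ ∈ sphere (0 : ℂ) 1, ζ - c ∈ ball (0 : ℂ) 1 ∧ u ζ = u (ζ - c) := by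
  set Ω := ball c 1 ∩ ball (0 : ℂ) 1
  have hsub : ∀ x ∈ ball c 1, x - c ∈ ball (0 : ℂ) 1 := fun x hx => by
    rwa [mem_ball, dist_zero_right, ← dist_eq_norm]
  have hshift : AnalyticOnNhd ℂ (fun x => u (x - c)) (ball c 1) := fun x hx =>
    (hu _ (hsub x hx)).comp (f := fun y => y - c) (by fun_prop)
  have hΩ : EqOn u (fun x => u (x - c)) Ω :=
    (hu.mono inter_subset_right).eqOn_of_preconnected_of_eventuallyEq
      (hshift.mono inter_subset_left) ((convex_ball c 1).inter (convex_ball 0 1)).isPreconnected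
      hx₀ h
  have hcpos : 0 < ‖c‖ := norm_pos_iff.2 hc
  have hclt : ‖c‖ < 2 := by
    have := dist_triangle_left c 0 x₀
    rw [dist_zero_right] at this
    linarith [mem_ball.1 hx₀.1, mem_ball.1 hx₀.2]
  set ζ : ℂ := c / ‖c‖
  have hζ : ζ ∈ sphere (0 : ℂ) 1 := by simp [ζ, hcpos.ne']
  have hζc : ζ ∈ ball c 1 := by
    have : ζ - c = (1 - ‖c‖ : ℝ) • ζ := by
      have : (‖c‖ : ℂ) ≠ 0 := Complex.ofReal_ne_zero.2 hcpos.ne'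
      simp only [ζ, Complex.real_smul]
      field_simp
      push_cast
      ring
    rw [mem_ball, dist_eq_norm, this, norm_smul, mem_sphere_zero_iff_norm.1 hζ, mul_one,
      Real.norm_eq_abs, abs_lt]
    constructor <;> linarith
  have hζΩ : ζ ∈ closure Ω := isOpen_ball.inter_closure
    ⟨hζc, (closure_ball (0 : ℂ) one_ne_zero).ge (sphere_subset_closedBall hζ)⟩
  refine ⟨ζ, hζ, hsub ζ hζc, hΩ.of_subset_closure (t := insert ζ Ω) ?_ ?_ (subset_insert _ _)
    (insert_subset hζΩ subset_closure) (mem_insert _ _)⟩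
  · exact hcont.mono (insert_subset (sphere_subset_closedBall hζ)
      (inter_subset_right.trans ball_subset_closedBall))
  · exact hshift.continuousOn.mono (insert_subset hζc inter_subset_left)

theorem holomorphic_disc_simple_of_embedded_boundary_general {n : ℕ}
    (u : ℂ → (Fin n → ℂ))
    (hcont : ContinuousOn u (closedBall (0 : ℂ) 1))
    (hhol : DifferentiableOn ℂ u (ball (0 : ℂ) 1))
    (hinj : Set.InjOn u (sphere (0 : ℂ) 1))
    (hint : Disjoint (u '' ball (0 : ℂ) 1) (u '' sphere (0 : ℂ) 1)) :
    IsSimpleDisc u := by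
  rintro ⟨U, V, hU, hV, hU₀, -, hUV, himg⟩
  have hu : AnalyticOnNhd ℂ u (ball (0 : ℂ) 1) := hhol.analyticOnNhd isOpen_ball
  set A := accumulationPairs (coincidencePairs u (closedBall (0 : ℂ) 1))
  have hC := isClosed_coincidencePairs isClosed_closedBall hcont
  have hA : IsCompact A := ((isCompact_closedBall (0 : ℂ) 1).prod (isCompact_closedBall 0 1))
    |>.of_isClosed_subset (isClosed_accumulationPairs hC)
      fun p hp => ⟨(accumulationPairs_subset hC hp).1, (accumulationPairs_subset hC hp).2.1⟩
  obtain ⟨p, hpA, hp⟩ := exists_mem_accumulationPairs_ne hinj hint hU hV.1 hU₀ hUV himg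
  obtain ⟨q, hqA, hqmax⟩ :=
    hA.exists_isMaxOn ⟨p, hpA⟩ (continuous_fst.dist continuous_snd).continuousOn
  have hq : q.1 ≠ q.2 := dist_pos.1 ((dist_pos.2 hp).trans_le (hqmax hpA))
  obtain ⟨hqC₁, hqC₂, hqu⟩ := accumulationPairs_subset hC hqA
  obtain ⟨hq₁, hq₂⟩ := mem_ball_of_apply_eq_of_ne hinj hint hqC₁ hqC₂ hqu hq
  obtain ⟨ζ, hζ, hζc, huζ⟩ := exists_sphere_apply_eq_apply_sub hcont hu (sub_ne_zero.2 hq)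
    ⟨by simpa [dist_eq_norm] using hq₂, hq₁⟩
    (eventually_apply_eq_apply_sub_of_isMaxOn_dist isOpen_ball (convex_ball 0 1).isPreconnected
      ball_subset_closedBall hu (not_exists_eqOn_const_ball hcont hint) hq₁ hq₂ hqA hqmax)
  exact disjoint_left.1 hint (mem_image_of_mem u hζc) ⟨ζ, hζ, huζ⟩

/-- Simplicity criterion for holomorphic discs: a holomorphic disc `u : 𝔻 → ℂⁿ` whose
boundary restriction is injective and whose interior avoids the image of the boundary
circle is simple. -/
theorem holomorphic_disc_simple_of_embedded_boundary {n : ℕ} (hn : 1 ≤ n)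
    (u : ℂ → (Fin n → ℂ))
    (hcont : ContinuousOn u (closedBall (0 : ℂ) 1))
    (hhol : DifferentiableOn ℂ u (ball (0 : ℂ) 1))
    (hinj : Set.InjOn u (sphere (0 : ℂ) 1))
    (hint : Disjoint (u '' ball (0 : ℂ) 1) (u '' sphere (0 : ℂ) 1)) :
    IsSimpleDisc u :=
  holomorphic_disc_simple_of_embedded_boundary_general u hcont hhol hinj hint
end

section
/- Bishop-type discs are mutually disjoint: let t₁, t₂ ∈ (−1,1) and for i = 1,2 let uᵢ be a smooth holomorphic disc with boundary on S^{tᵢ} ∖ {q₊^{tᵢ}, q₋^{tᵢ}} of winding number one. Then either u₁(𝔻) = u₂(𝔻) or u₁(𝔻) ∩ u₂(𝔻) = ∅. In particular, if t₁ ≠ t₂ then the images u₁(𝔻) and u₂(𝔻) are disjoint. -/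
open Metric Complex

/-- The punctured level sphere `S^t ∖ {q₊^t, q₋^t} = {(z₁,z₂) ∈ S³ : Im z₂ = t, z₁ ≠ 0}`. -/
def puncturedLevelSphere (t : ℝ) : Set (ℂ × ℂ) :=
  {p : ℂ × ℂ | ‖p.1‖ ^ 2 + ‖p.2‖ ^ 2 = 1 ∧ p.2.im = t ∧ p.1 ≠ 0}

/-- The disc `u` has winding number one: its first component `w` satisfies
`(2πi)⁻¹ ∮_{|z|=1} w′(z)/w(z) dz = 1`. -/
def WindingNumberOne (u : ℂ → ℂ × ℂ) : Prop :=
  (2 * (Real.pi : ℂ) * Complex.I)⁻¹ *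
    (∮ z in C(0, 1), (discDeriv u z).1 / (u z).1) = 1

lemma aux_im_ge {v : ℂ → ℂ} (hc : ContinuousOn v (closedBall (0:ℂ) 1))
    (hd : DifferentiableOn ℂ v (ball (0:ℂ) 1)) {t : ℝ}
    (hb : ∀ z ∈ sphere (0:ℂ) 1, (v z).im = t) :
    ∀ z ∈ closedBall (0:ℂ) 1, t ≤ (v z).im := by
  intro z hz
  set f : ℂ → ℂ := fun z => Complex.exp (Complex.I * v z) with hf
  have hnorm : ∀ ζ, ‖f ζ‖ = Real.exp (-(v ζ).im) := by
    intro ζ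
    simp [hf, Complex.norm_exp, Complex.mul_re]
  have hdc : DiffContOnCl ℂ f (ball (0:ℂ) 1) := by
    constructor
    · exact (hd.const_mul Complex.I).cexp
    · rw [closure_ball (0:ℂ) one_ne_zero]
      exact (hc.const_smul Complex.I).cexp
  have hfr : ∀ ζ ∈ frontier (ball (0:ℂ) 1), ‖f ζ‖ ≤ Real.exp (-t) := by
    intro ζ hζ
    rw [frontier_ball (0:ℂ) one_ne_zero] at hζ
    rw [hnorm, hb ζ hζ]
  have hcl : z ∈ closure (ball (0:ℂ) 1) := by
    rwa [closure_ball (0:ℂ) one_ne_zero]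
  have := Complex.norm_le_of_forall_mem_frontier_norm_le isBounded_ball hdc hfr hcl
  rw [hnorm] at this
  have := Real.exp_le_exp.mp this
  linarith

lemma disc_image {t : ℝ} {u : ℂ → ℂ × ℂ}
    (hu : IsHolomorphicDisc u (puncturedLevelSphere t)) (hw : WindingNumberOne u) :
    ∃ c : ℂ, c.im = t ∧ ∃ r : ℝ, 0 < r ∧ r ^ 2 = 1 - ‖c‖ ^ 2 ∧
      u '' closedBall (0:ℂ) 1 = (closedBall (0:ℂ) r) ×ˢ ({c} : Set ℂ) := by
  obtain ⟨⟨V, hVo, hVs, hVsm⟩, hdiff, -, hbd⟩ := hu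
  -- basic continuity
  have huc : ContinuousOn u (closedBall (0:ℂ) 1) := (hVsm.continuousOn).mono hVs
  set w : ℂ → ℂ := fun z => (u z).1 with hwdef
  set h : ℂ → ℂ := fun z => (u z).2 with hhdef
  have hwc : ContinuousOn w (closedBall (0:ℂ) 1) := huc.fst
  have hhc : ContinuousOn h (closedBall (0:ℂ) 1) := huc.snd
  have hwd : DifferentiableOn ℂ w (ball (0:ℂ) 1) := hdiff.fst
  have hhd : DifferentiableOn ℂ h (ball (0:ℂ) 1) := hdiff.snd
  have hsphere : ∀ z ∈ sphere (0:ℂ) 1,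
      ‖w z‖ ^ 2 + ‖h z‖ ^ 2 = 1 ∧ (h z).im = t ∧ w z ≠ 0 := by
    intro z hz
    have : ‖z‖ = 1 := by
      rwa [mem_sphere_iff_norm, sub_zero] at hz
    exact hbd z this
  -- Step 1: im of h is t on closed ball
  have him : ∀ z ∈ closedBall (0:ℂ) 1, (h z).im = t := by
    have h1 : ∀ z ∈ closedBall (0:ℂ) 1, t ≤ (h z).im :=
      aux_im_ge hhc hhd (fun z hz => (hsphere z hz).2.1)
    have h2 : ∀ z ∈ closedBall (0:ℂ) 1, -t ≤ ((fun ζ => -(h ζ)) z).im := by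
      refine aux_im_ge hhc.neg hhd.neg ?_
      intro z hz
      simp [(hsphere z hz).2.1]
    intro z hz
    have ha := h2 z hz
    simp only [Complex.neg_im] at ha
    have hb' := h1 z hz
    linarith
  -- Step 2: h is constant
  have hconst : ∃ c : ℂ, ∀ z ∈ ball (0:ℂ) 1, h z = c := by
    have hA : AnalyticOnNhd ℂ h (ball (0:ℂ) 1) := hhd.analyticOnNhd isOpen_ball
    rcases hA.is_constant_or_isOpen (convex_ball _ _).isPreconnected with hcst | hopen
    · exact hcst
    · exfalso
      have hopen' : IsOpen (h '' ball (0:ℂ) 1) := hopen _ (subset_refl _) isOpen_ball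
      have h0 : h 0 ∈ h '' ball (0:ℂ) 1 := ⟨0, mem_ball_self one_pos, rfl⟩
      obtain ⟨ε, hε, hball⟩ := Metric.isOpen_iff.mp hopen' _ h0
      have hmem : h 0 + (ε/2 : ℝ) * Complex.I ∈ ball (h 0) ε := by
        rw [mem_ball, Complex.dist_eq, add_sub_cancel_left]
        rw [norm_mul, Complex.norm_I, Complex.norm_real, Real.norm_eq_abs]
        rw [abs_of_pos (by linarith)]
        linarith
      obtain ⟨z', hz', hz'eq⟩ := hball hmem
      have e1 : (h z').im = t := him z' (ball_subset_closedBall hz')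
      have e2 : (h 0).im = t := him 0 (mem_closedBall_self zero_le_one)
      rw [hz'eq] at e1
      simp only [Complex.add_im, Complex.mul_im, Complex.ofReal_re, Complex.I_im,
        Complex.ofReal_im, Complex.I_re] at e1
      rw [e2] at e1
      ring_nf at e1
      linarith [e1]
  obtain ⟨c, hcball⟩ := hconst
  have hccb : ∀ z ∈ closedBall (0:ℂ) 1, h z = c := by
    intro z hz
    have h1 : h '' closure (ball (0:ℂ) 1) ⊆ closure (h '' ball (0:ℂ) 1) := by
      apply ContinuousOn.image_closure
      rw [closure_ball (0:ℂ) one_ne_zero]; exact hhc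
    have h2 : h z ∈ closure (h '' ball (0:ℂ) 1) :=
      h1 ⟨z, by rwa [closure_ball (0:ℂ) one_ne_zero], rfl⟩
    have h3 : h '' ball (0:ℂ) 1 ⊆ {c} := by
      rintro _ ⟨x, hx, rfl⟩; exact hcball x hx
    simpa using (closure_minimal h3 isClosed_singleton) h2
  have hcim : c.im = t := by
    rw [← hccb 0 (mem_closedBall_self zero_le_one)]
    exact him 0 (mem_closedBall_self zero_le_one)
  -- Step 3: radius r
  set r : ℝ := Real.sqrt (1 - ‖c‖ ^ 2) with hrdef
  have hb1 : ‖w 1‖ ^ 2 = 1 - ‖c‖ ^ 2 ∧ w 1 ≠ 0 := by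
    have h1s : (1:ℂ) ∈ sphere (0:ℂ) 1 := by simp
    have hs1 := hsphere 1 h1s
    have hc1 : h 1 = c := hccb 1 (by simp)
    rw [hc1] at hs1
    exact ⟨by linarith [hs1.1], hs1.2.2⟩
  have hrpos2 : 0 < 1 - ‖c‖ ^ 2 := by
    rcases hb1 with ⟨e1, e2⟩
    have : 0 < ‖w 1‖ := norm_pos_iff.mpr e2
    nlinarith
  have hrpos : 0 < r := Real.sqrt_pos.mpr hrpos2
  have hr2 : r ^ 2 = 1 - ‖c‖ ^ 2 := Real.sq_sqrt hrpos2.le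
  have hwr : ∀ z ∈ sphere (0:ℂ) 1, ‖w z‖ = r := by
    intro z hz
    have h1 := (hsphere z hz).1
    have hcz : h z = c := hccb z (sphere_subset_closedBall hz)
    rw [hcz] at h1
    have hsq : ‖w z‖ ^ 2 = r ^ 2 := by rw [hr2]; linarith
    calc ‖w z‖ = Real.sqrt (‖w z‖ ^ 2) :=
          (Real.sqrt_sq (norm_nonneg _)).symm
      _ = Real.sqrt (r ^ 2) := by rw [hsq]
      _ = r := Real.sqrt_sq hrpos.le
  -- Step 4: max modulus for w
  have hwle : ∀ z ∈ closedBall (0:ℂ) 1, ‖w z‖ ≤ r := by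
    intro z hz
    have hdc : DiffContOnCl ℂ w (ball (0:ℂ) 1) :=
      ⟨hwd, by rwa [closure_ball (0:ℂ) one_ne_zero]⟩
    have hfr : ∀ ζ ∈ frontier (ball (0:ℂ) 1), ‖w ζ‖ ≤ r := by
      intro ζ hζ
      rw [frontier_ball (0:ℂ) one_ne_zero] at hζ
      rw [hwr ζ hζ]
    have := Complex.norm_le_of_forall_mem_frontier_norm_le isBounded_ball hdc hfr
      (by rwa [closure_ball (0:ℂ) one_ne_zero])
    exact this
  -- Step 5: the derivative W
  set W : ℂ → ℂ := fun z => (fderiv ℝ u z 1).1 with hWdef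
  have hWc : ContinuousOn W (closedBall (0:ℂ) 1) := by
    have h1 : ContinuousOn (fderiv ℝ u) V := hVsm.continuousOn_fderiv_of_isOpen hVo (by simp)
    have h2 : Continuous fun (L : ℂ →L[ℝ] ℂ × ℂ) => (L 1).1 :=
      (ContinuousLinearMap.apply ℝ (ℂ × ℂ) (1:ℂ)).continuous.fst
    exact h2.comp_continuousOn (h1.mono hVs)
  have hWeq : ∀ z ∈ ball (0:ℂ) 1, W z = (deriv u z).1 := by
    intro z hz
    have hz' : DifferentiableAt ℂ u z := hdiff.differentiableAt (isOpen_ball.mem_nhds hz)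
    have hres : fderiv ℝ u z = (fderiv ℂ u z).restrictScalars ℝ := hz'.fderiv_restrictScalars ℝ
    show (fderiv ℝ u z 1).1 = (deriv u z).1
    rw [hres]
    rfl
  have hWd : DifferentiableOn ℂ W (ball (0:ℂ) 1) := by
    have hA : AnalyticOnNhd ℂ u (ball (0:ℂ) 1) := hdiff.analyticOnNhd isOpen_ball
    have hdd : DifferentiableOn ℂ (fun z => (deriv u z).1) (ball (0:ℂ) 1) :=
      (hA.deriv.differentiableOn).fst
    exact hdd.congr hWeq
  -- Step 6: Cauchy vanishing
  have hcauchy : ∀ a : ℂ, (∀ z ∈ closedBall (0:ℂ) 1, w z ≠ a) →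
      (∮ z in C(0, 1), W z / (w z - a)) = 0 := by
    intro a ha
    apply circleIntegral_eq_zero_of_differentiable_on_off_countable zero_le_one
      Set.countable_empty
    · exact hWc.div (hwc.sub continuousOn_const) (fun z hz => sub_ne_zero.mpr (ha z hz))
    · intro z hz
      have hzb : z ∈ ball (0:ℂ) 1 := hz.1
      have h1 := hWd.differentiableAt (isOpen_ball.mem_nhds hzb)
      have h2 := (hwd.differentiableAt (isOpen_ball.mem_nhds hzb)).sub_const a
      exact h1.div h2 (sub_ne_zero.mpr (ha z (ball_subset_closedBall hzb)))
  -- Step 7: winding integral and a zero of w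
  have h2pi : (2 * (Real.pi:ℂ) * Complex.I) ≠ 0 := by
    simp [Real.pi_ne_zero, Complex.I_ne_zero, Complex.ofReal_ne_zero]
  have hw' : (∮ z in C(0, 1), W z / w z) = 2 * (Real.pi:ℂ) * Complex.I := by
    have hh := hw
    unfold WindingNumberOne discDeriv at hh
    rw [inv_mul_eq_one₀ h2pi] at hh
    exact hh.symm
  have hzero : ∃ z ∈ ball (0:ℂ) 1, w z = 0 := by
    by_contra hcon
    push_neg at hcon
    have hall : ∀ z ∈ closedBall (0:ℂ) 1, w z ≠ 0 := by
      intro z hz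
      rcases eq_or_lt_of_le (mem_closedBall.mp hz) with heq | hlt
      · have hzs : z ∈ sphere (0:ℂ) 1 := heq
        intro h0
        have := hwr z hzs
        rw [h0] at this
        simp at this
        exact absurd this.symm (ne_of_gt hrpos)
      · exact hcon z (mem_ball.mpr hlt)
    have hzero' := hcauchy 0 hall
    simp only [sub_zero] at hzero'
    rw [hw'] at hzero'
    exact h2pi hzero'
  obtain ⟨z₀, hz₀b, hz₀⟩ := hzero
  -- Step 8: open mapping for w
  have hwopen : IsOpen (w '' ball (0:ℂ) 1) := by
    have hA : AnalyticOnNhd ℂ w (ball (0:ℂ) 1) := hwd.analyticOnNhd isOpen_ball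
    rcases hA.is_constant_or_isOpen (convex_ball _ _).isPreconnected with ⟨k, hk⟩ | hopen
    · exfalso
      have hk0 : k = 0 := by rw [← hz₀]; exact (hk z₀ hz₀b).symm
      have hcl : ∀ z ∈ closedBall (0:ℂ) 1, w z = k := by
        intro z hz
        have h1 : w '' closure (ball (0:ℂ) 1) ⊆ closure (w '' ball (0:ℂ) 1) := by
          apply ContinuousOn.image_closure
          rw [closure_ball (0:ℂ) one_ne_zero]; exact hwc
        have h2 : w z ∈ closure (w '' ball (0:ℂ) 1) :=
          h1 ⟨z, by rwa [closure_ball (0:ℂ) one_ne_zero], rfl⟩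
        have h3 : w '' ball (0:ℂ) 1 ⊆ {k} := by
          rintro _ ⟨x, hx, rfl⟩; exact hk x hx
        simpa using (closure_minimal h3 isClosed_singleton) h2
      have hone := hwr 1 (by simp)
      rw [hcl 1 (by simp), hk0] at hone
      simp at hone
      exact absurd hone.symm (ne_of_gt hrpos)
    · exact hopen _ (subset_refl _) isOpen_ball
  -- Step 9: image of w is the closed ball of radius r
  have hclosed : IsClosed (w '' closedBall (0:ℂ) 1) :=
    ((isCompact_closedBall (0:ℂ) 1).image_of_continuousOn hwc).isClosed
  have himg : w '' closedBall (0:ℂ) 1 = closedBall (0:ℂ) r := by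
    have hsub : w '' closedBall (0:ℂ) 1 ⊆ closedBall (0:ℂ) r := by
      rintro _ ⟨z, hz, rfl⟩
      rw [mem_closedBall, Complex.dist_eq, sub_zero]
      exact hwle z hz
    have hball : ball (0:ℂ) r ⊆ w '' ball (0:ℂ) 1 := by
      set O := ball (0:ℂ) r \ w '' closedBall (0:ℂ) 1 with hO
      have hOopen : IsOpen O := isOpen_ball.sdiff hclosed
      refine IsPreconnected.subset_left_of_subset_union hwopen hOopen ?_ ?_ ?_
        (convex_ball _ _).isPreconnected
      · rw [Set.disjoint_left]
        rintro a ⟨z, hz, rfl⟩ haO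
        exact haO.2 ⟨z, ball_subset_closedBall hz, rfl⟩
      · intro a ha
        by_cases hmem : a ∈ w '' closedBall (0:ℂ) 1
        · left
          obtain ⟨z, hz, rfl⟩ := hmem
          rcases eq_or_lt_of_le (mem_closedBall.mp hz) with heq | hlt
          · exfalso
            have hzs : z ∈ sphere (0:ℂ) 1 := heq
            have habs := hwr z hzs
            rw [mem_ball, Complex.dist_eq, sub_zero] at ha
            rw [habs] at ha
            exact lt_irrefl r ha
          · exact ⟨z, mem_ball.mpr hlt, rfl⟩
        · exact Or.inr ⟨ha, hmem⟩
      · exact ⟨0, mem_ball_self hrpos, ⟨z₀, hz₀b, hz₀⟩⟩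
    refine Set.Subset.antisymm hsub ?_
    calc closedBall (0:ℂ) r = closure (ball (0:ℂ) r) :=
          (closure_ball _ (ne_of_gt hrpos)).symm
      _ ⊆ w '' closedBall (0:ℂ) 1 :=
          closure_minimal (hball.trans (Set.image_mono ball_subset_closedBall)) hclosed
  -- conclusion
  refine ⟨c, hcim, r, hrpos, hr2, ?_⟩
  ext p
  rw [Set.mem_prod, Set.mem_singleton_iff]
  constructor
  · rintro ⟨z, hz, rfl⟩
    exact ⟨by rw [← himg]; exact ⟨z, hz, rfl⟩, hccb z hz⟩
  · rintro ⟨hp1, hp2⟩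
    rw [← himg] at hp1
    obtain ⟨z, hz, hwz⟩ := hp1
    refine ⟨z, hz, ?_⟩
    have hhz := hccb z hz
    apply Prod.ext
    · exact hwz
    · exact hhz.trans hp2.symm

/-- Bishop-type discs are mutually disjoint: given two smooth holomorphic discs of winding
number one with boundaries on punctured level spheres `S^{t₁}`, `S^{t₂}`, their images on
the closed unit disc either coincide or are disjoint; for `t₁ ≠ t₂` they are disjoint. -/
theorem bishop_discs_disjoint (t₁ t₂ : ℝ)
    (ht₁ : t₁ ∈ Set.Ioo (-1 : ℝ) 1) (ht₂ : t₂ ∈ Set.Ioo (-1 : ℝ) 1)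
    (u₁ u₂ : ℂ → ℂ × ℂ)
    (hu₁ : IsHolomorphicDisc u₁ (puncturedLevelSphere t₁))
    (hu₂ : IsHolomorphicDisc u₂ (puncturedLevelSphere t₂))
    (hw₁ : WindingNumberOne u₁) (hw₂ : WindingNumberOne u₂) :
    (u₁ '' closedBall (0 : ℂ) 1 = u₂ '' closedBall (0 : ℂ) 1 ∨
      Disjoint (u₁ '' closedBall (0 : ℂ) 1) (u₂ '' closedBall (0 : ℂ) 1)) ∧
    (t₁ ≠ t₂ →
      Disjoint (u₁ '' closedBall (0 : ℂ) 1) (u₂ '' closedBall (0 : ℂ) 1)) := by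
  obtain ⟨c₁, hc₁, r₁, hr₁, hr₁2, him₁⟩ := disc_image hu₁ hw₁
  obtain ⟨c₂, hc₂, r₂, hr₂, hr₂2, him₂⟩ := disc_image hu₂ hw₂
  have hdisj : c₁ ≠ c₂ → Disjoint (u₁ '' closedBall (0:ℂ) 1) (u₂ '' closedBall (0:ℂ) 1) := by
    intro hne
    rw [him₁, him₂, Set.disjoint_left]
    rintro p hp1 hp2
    rw [Set.mem_prod, Set.mem_singleton_iff] at hp1 hp2
    exact hne (hp1.2.symm.trans hp2.2)
  constructor
  · by_cases hce : c₁ = c₂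
    · left
      have hre : r₁ = r₂ := by
        have : r₁ ^ 2 = r₂ ^ 2 := by rw [hr₁2, hr₂2, hce]
        nlinarith
      rw [him₁, him₂, hce, hre]
    · exact Or.inr (hdisj hce)
  · intro ht
    apply hdisj
    intro hce
    exact ht (by rw [← hc₁, ← hc₂, hce])
end

section
/- Distinct holomorphic discs intersect in finitely many points: let t ∈ (−1,1) and let u₁, u₂ be smooth holomorphic discs with boundary on the totally real punctured sphere S^t ∖ {q₊^t, q₋^t}. If u₁(𝔻) ≠ u₂(𝔻), then the set of intersection points S(u₁,u₂) = {(z₁,z₂) ∈ 𝔻 × 𝔻 : u₁(z₁) = u₂(z₂)} is finite. Equivalently, if S(u₁,u₂) is infinite then u₁(𝔻) = u₂(𝔻). -/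
open Metric Complex

lemma disc_structure (t : ℝ) (u : ℂ → ℂ × ℂ)
    (hu : IsHolomorphicDisc u (puncturedLevelSphere t)) :
    ∃ c : ℂ, (∀ z ∈ closedBall (0:ℂ) 1, (u z).2 = c) ∧
      u '' closedBall (0:ℂ) 1
        = (closedBall (0:ℂ) (Real.sqrt (1 - ‖c‖ ^ 2))) ×ˢ ({c} : Set ℂ) := by
  obtain ⟨⟨V, hVo, hVsub, hVsm⟩, hdiff, hnc, hbdry⟩ := hu
  have hcont : ContinuousOn u (closedBall (0:ℂ) 1) := (hVsm.continuousOn).mono hVsub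
  have hclos : closure (ball (0:ℂ) 1) = closedBall (0:ℂ) 1 := closure_ball 0 one_ne_zero
  have hfro : frontier (ball (0:ℂ) 1) = sphere (0:ℂ) 1 := frontier_ball 0 one_ne_zero
  have hsm : ∀ z ∈ sphere (0:ℂ) 1, ‖z‖ = 1 := by
    intro z hz
    rw [mem_sphere_zero_iff_norm] at hz
    simpa using hz
  -- second component
  have hvd : DifferentiableOn ℂ (fun z => (u z).2) (ball (0:ℂ) 1) := hdiff.snd
  have hvc : ContinuousOn (fun z => (u z).2) (closedBall (0:ℂ) 1) := hcont.snd
  -- Step A: imaginary part of second component is t on the closed ball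
  have him : ∀ z ∈ closedBall (0:ℂ) 1, ((u z).2).im = t := by
    have key : ∀ s : ℝ, s = 1 ∨ s = -1 →
        ∀ z ∈ closedBall (0:ℂ) 1, Real.exp (-(s * ((u z).2).im)) ≤ Real.exp (-(s * t)) := by
      intro s hs z hz
      have hnorm : ∀ w : ℂ, ‖Complex.exp (s * Complex.I * w)‖ = Real.exp (-(s * w.im)) := by
        intro w
        rw [Complex.norm_exp]
        congr 1
        simp [Complex.mul_re, Complex.mul_im]
      have hd : DiffContOnCl ℂ (fun z => Complex.exp (s * Complex.I * (u z).2))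
          (ball (0:ℂ) 1) := by
        refine ⟨((hvd.const_smul (s * Complex.I : ℂ)).congr ?_).cexp, ?_⟩
        · intro x hx; simp [smul_eq_mul]
        · rw [hclos]
          exact Complex.continuous_exp.comp_continuousOn
            ((continuousOn_const.mul hvc))
      have := Complex.norm_le_of_forall_mem_frontier_norm_le isBounded_ball hd
        (C := Real.exp (-(s * t))) (fun w hw => by
          rw [hfro] at hw
          rw [hnorm]
          have := (hbdry w (hsm w hw)).2.1
          rw [this]) (z := z) (by rw [hclos]; exact hz)
      rwa [hnorm] at this
    intro z hz
    have h1 := key 1 (Or.inl rfl) z hz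
    have h2 := key (-1) (Or.inr rfl) z hz
    rw [Real.exp_le_exp] at h1 h2
    simp only [one_mul, neg_mul, neg_neg, neg_le_neg_iff] at h1 h2
    linarith
  -- Step A': second component is constant
  have hA : AnalyticOnNhd ℂ (fun z => (u z).2) (ball (0:ℂ) 1) :=
    hvd.analyticOnNhd isOpen_ball
  have hvconst : ∃ c : ℂ, ∀ z ∈ closedBall (0:ℂ) 1, (u z).2 = c := by
    rcases hA.is_constant_or_isOpen (convex_ball (0:ℂ) 1).isPreconnected with ⟨c, hc⟩ | hop
    · refine ⟨c, ?_⟩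
      have : Set.EqOn (fun z => (u z).2) (fun _ => c) (closedBall (0:ℂ) 1) := by
        refine Set.EqOn.of_subset_closure (fun z hz => hc z hz) hvc continuousOn_const
          ball_subset_closedBall ?_
        rw [hclos]
      exact fun z hz => this hz
    · exfalso
      have hOopen : IsOpen ((fun z => (u z).2) '' ball (0:ℂ) 1) :=
        hop _ Set.Subset.rfl isOpen_ball
      have hmem : (u 0).2 ∈ (fun z => (u z).2) '' ball (0:ℂ) 1 :=
        ⟨0, by simp, rfl⟩
      rcases Metric.isOpen_iff.1 hOopen _ hmem with ⟨ε, hε, hball⟩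
      have : (u 0).2 + Complex.I * (ε/2) ∈ (fun z => (u z).2) '' ball (0:ℂ) 1 := by
        apply hball
        simp [Complex.dist_eq]
        rw [abs_of_pos hε]; linarith
      obtain ⟨z, hz, hzeq⟩ := this
      have h1 : ((u z).2).im = t := him z (ball_subset_closedBall hz)
      have h2 : ((u 0).2).im = t := him 0 (by simp)
      have : ((u 0).2 + Complex.I * (ε/2)).im = t := by rw [← hzeq]; exact h1
      simp [Complex.add_im, Complex.mul_im] at this
      rw [h2] at this
      linarith
  obtain ⟨c, hc⟩ := hvconst
  -- first component
  have hwd : DifferentiableOn ℂ (fun z => (u z).1) (ball (0:ℂ) 1) := hdiff.fst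
  have hwc : ContinuousOn (fun z => (u z).1) (closedBall (0:ℂ) 1) := hcont.fst
  set r := Real.sqrt (1 - ‖c‖ ^ 2) with hr
  have habs_r : ∀ z : ℂ, ‖z‖ = 1 → ‖(u z).1‖ = r := by
    intro z hz
    have hzc : z ∈ closedBall (0:ℂ) 1 := by
      rw [mem_closedBall_zero_iff]; simpa using hz.le
    have h1 := (hbdry z hz).1
    rw [hc z hzc] at h1
    have h2 : ‖(u z).1‖ ^ 2 = 1 - ‖c‖ ^ 2 := by linarith
    rw [hr, ← h2, Real.sqrt_sq (norm_nonneg _)]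
  have hr_pos : 0 < r := by
    have h1 : ‖(1:ℂ)‖ = 1 := by simp
    have h2 := habs_r 1 h1
    have hne0 : (u 1).1 ≠ 0 := (hbdry 1 h1).2.2
    rw [← h2]
    exact norm_pos_iff.mpr hne0
  have hw_le : ∀ z ∈ closedBall (0:ℂ) 1, ‖(u z).1‖ ≤ r := by
    intro z hz
    have hd : DiffContOnCl ℂ (fun z => (u z).1) (ball (0:ℂ) 1) :=
      ⟨hwd, by rw [hclos]; exact hwc⟩
    have := Complex.norm_le_of_forall_mem_frontier_norm_le isBounded_ball hd (C := r)
      (fun w hw => by rw [hfro] at hw; exact (habs_r w (hsm w hw)).le)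
      (z := z) (by rw [hclos]; exact hz)
    exact this
  have hw_nc : ¬ ∃ a : ℂ, ∀ z ∈ ball (0:ℂ) 1, (u z).1 = a := by
    rintro ⟨a, ha⟩
    apply hnc
    refine ⟨(a, c), fun z hz => ?_⟩
    have ha' : ∀ z ∈ closedBall (0:ℂ) 1, (u z).1 = a := by
      have h : Set.EqOn (fun z => (u z).1) (fun _ => a) (closedBall (0:ℂ) 1) :=
        Set.EqOn.of_subset_closure (fun z hz => ha z hz) hwc continuousOn_const
          ball_subset_closedBall (by rw [hclos])
      exact fun z hz => h hz
    exact Prod.ext (ha' z hz) (hc z hz)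
  have hzero : ∃ z₀ ∈ ball (0:ℂ) 1, (u z₀).1 = 0 := by
    by_contra h
    push_neg at h
    have hne0 : ∀ z ∈ closedBall (0:ℂ) 1, (u z).1 ≠ 0 := by
      intro z hz
      rcases lt_or_eq_of_le (mem_closedBall_zero_iff.1 hz) with hlt | heq
      · exact h z (mem_ball_zero_iff.2 hlt)
      · intro h0
        have h3 := habs_r z (by simpa using heq)
        rw [h0] at h3; simp at h3; exact hr_pos.ne h3
    have hgd : DiffContOnCl ℂ (fun z => ((u z).1)⁻¹) (ball (0:ℂ) 1) := by
      refine ⟨hwd.inv (fun z hz => h z hz), ?_⟩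
      rw [hclos]
      exact hwc.inv₀ hne0
    have hge : ∀ z ∈ closedBall (0:ℂ) 1, r ≤ ‖(u z).1‖ := by
      intro z hz
      have hb := Complex.norm_le_of_forall_mem_frontier_norm_le isBounded_ball hgd (C := r⁻¹)
        (fun w hw => by
          rw [hfro] at hw
          rw [norm_inv, habs_r w (hsm w hw)]) (z := z)
        (by rw [hclos]; exact hz)
      rw [norm_inv] at hb
      have habs_pos : 0 < ‖(u z).1‖ := norm_pos_iff.mpr (hne0 z hz)
      have h4 : (‖(u z).1‖)⁻¹ * (‖(u z).1‖ * r)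
          ≤ r⁻¹ * (‖(u z).1‖ * r) :=
        mul_le_mul_of_nonneg_right hb (mul_nonneg habs_pos.le hr_pos.le)
      have h5 : (‖(u z).1‖)⁻¹ * (‖(u z).1‖ * r) = r := by
        field_simp
      have h6 : r⁻¹ * (‖(u z).1‖ * r) = ‖(u z).1‖ := by
        field_simp
      rw [h5, h6] at h4
      exact h4
    have heq : ∀ z ∈ ball (0:ℂ) 1, ‖(u z).1‖ = r := fun z hz =>
      le_antisymm (hw_le z (ball_subset_closedBall hz)) (hge z (ball_subset_closedBall hz))
    have hmax : IsMaxOn (norm ∘ (fun z => (u z).1)) (ball (0:ℂ) 1) 0 := by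
      intro z hz
      simp only [Function.comp, Set.mem_setOf_eq]
      rw [heq z hz, heq 0 (by simp)]
    have hcst := Complex.eqOn_of_isPreconnected_of_isMaxOn_norm
      (convex_ball (0:ℂ) 1).isPreconnected isOpen_ball hwd (by simp) hmax
    exact hw_nc ⟨(u 0).1, fun z hz => hcst hz⟩
  have hwA : AnalyticOnNhd ℂ (fun z => (u z).1) (ball (0:ℂ) 1) := hwd.analyticOnNhd isOpen_ball
  have hO_open : IsOpen ((fun z => (u z).1) '' ball (0:ℂ) 1) := by
    rcases hwA.is_constant_or_isOpen (convex_ball (0:ℂ) 1).isPreconnected with ⟨a, ha⟩ | hop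
    · exact absurd ⟨a, ha⟩ hw_nc
    · exact hop _ Set.Subset.rfl isOpen_ball
  have hK_cpt : IsCompact ((fun z => (u z).1) '' closedBall (0:ℂ) 1) :=
    (isCompact_closedBall _ _).image_of_continuousOn hwc
  have hOK : (fun z => (u z).1) '' ball (0:ℂ) 1 ⊆ (fun z => (u z).1) '' closedBall (0:ℂ) 1 :=
    Set.image_mono ball_subset_closedBall
  have hsub : ball (0:ℂ) r ⊆ (fun z => (u z).1) '' ball (0:ℂ) 1 := by
    obtain ⟨z₀, hz₀, hz₀0⟩ := hzero
    refine (convex_ball (0:ℂ) r).isPreconnected.subset_of_closure_inter_subset hO_open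
      ⟨0, mem_ball_self hr_pos, ⟨z₀, hz₀, hz₀0⟩⟩ ?_
    rintro a ⟨hacl, har⟩
    have hmem : a ∈ (fun z => (u z).1) '' closedBall (0:ℂ) 1 :=
      (hK_cpt.isClosed.closure_subset_iff.2 hOK) hacl
    obtain ⟨z₁, hz₁, rfl⟩ := hmem
    have hlt : ‖(u z₁).1‖ < r := by
      rw [mem_ball_zero_iff] at har; simpa using har
    have hz₁b : z₁ ∈ ball (0:ℂ) 1 := by
      rw [mem_ball_zero_iff]
      rcases lt_or_eq_of_le (mem_closedBall_zero_iff.1 hz₁) with hlt1 | heq1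
      · exact hlt1
      · exact absurd (habs_r z₁ (by simpa using heq1)) (ne_of_lt hlt)
    exact ⟨z₁, hz₁b, rfl⟩
  have hK_eq : (fun z => (u z).1) '' closedBall (0:ℂ) 1 = closedBall (0:ℂ) r := by
    apply Set.Subset.antisymm
    · rintro x ⟨z, hz, rfl⟩
      rw [mem_closedBall_zero_iff]
      simpa using hw_le z hz
    · have h1 : closedBall (0:ℂ) r ⊆ closure ((fun z => (u z).1) '' ball (0:ℂ) 1) := by
        rw [← closure_ball (0:ℂ) hr_pos.ne']
        exact closure_mono hsub
      exact fun x hx => (hK_cpt.isClosed.closure_subset_iff.2 hOK) (h1 hx)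
  refine ⟨c, hc, ?_⟩
  ext ⟨x, y⟩
  rw [Set.mem_prod]
  constructor
  · rintro ⟨z, hz, huz⟩
    refine ⟨by rw [← hK_eq]; exact ⟨z, hz, congrArg Prod.fst huz⟩, ?_⟩
    exact Set.mem_singleton_iff.2 ((congrArg Prod.snd huz).symm.trans (hc z hz))
  · rintro ⟨hx, hy⟩
    rw [← hK_eq] at hx
    obtain ⟨z, hz, hzx⟩ := hx
    have hyc : y = c := hy
    exact ⟨z, hz, Prod.ext (by simpa using hzx) (by rw [hc z hz, hyc])⟩

/-- Distinct holomorphic discs intersect in finitely many points: if `u₁, u₂` are smooth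
holomorphic discs with boundary on the totally real punctured sphere
`S^t ∖ {q₊^t, q₋^t}` and their images on the closed unit disc differ, then the set
`S(u₁,u₂) = {(z₁,z₂) ∈ 𝔻 × 𝔻 : u₁(z₁) = u₂(z₂)}` of intersection points is finite. -/
theorem distinct_holomorphic_discs_finite_intersection (t : ℝ)
    (ht : t ∈ Set.Ioo (-1 : ℝ) 1)
    (u₁ u₂ : ℂ → ℂ × ℂ)
    (hu₁ : IsHolomorphicDisc u₁ (puncturedLevelSphere t))
    (hu₂ : IsHolomorphicDisc u₂ (puncturedLevelSphere t))
    (hne : u₁ '' closedBall (0 : ℂ) 1 ≠ u₂ '' closedBall (0 : ℂ) 1) :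
    Set.Finite {p : ℂ × ℂ | p.1 ∈ closedBall (0 : ℂ) 1 ∧ p.2 ∈ closedBall (0 : ℂ) 1 ∧
      u₁ p.1 = u₂ p.2} := by
  obtain ⟨c₁, hc₁, himg₁⟩ := disc_structure t u₁ hu₁
  obtain ⟨c₂, hc₂, himg₂⟩ := disc_structure t u₂ hu₂
  by_cases hcc : c₁ = c₂
  · exact absurd (himg₁.trans (by rw [hcc, ← himg₂])) hne
  · have : {p : ℂ × ℂ | p.1 ∈ closedBall (0 : ℂ) 1 ∧ p.2 ∈ closedBall (0 : ℂ) 1 ∧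
        u₁ p.1 = u₂ p.2} = ∅ := by
      ext p
      simp only [Set.mem_setOf_eq, Set.mem_empty_iff_false, iff_false]
      rintro ⟨h1, h2, h3⟩
      exact hcc ((hc₁ p.1 h1).symm.trans (by rw [h3]; exact hc₂ p.2 h2))
    rw [this]
    exact Set.finite_empty
end

section
/- Characterisation of infinitesimal automorphisms of the disc: let η : ℂ → ℂ be continuous on the closed unit disc 𝔻 and holomorphic on the open unit disc. Then η satisfies the totally real boundary condition η(z) ∈ ℝ·(iz) for every z with |z| = 1 (i.e. η(z) is a real multiple of iz on the unit circle) if and only if there exist a ∈ ℂ and b ∈ ℝ such that η(z) = a + i b z − conj(a)·z² for all z ∈ 𝔻. In particular, the space of such η is a 3-dimensional real vector space (the Lie algebra of infinitesimal holomorphic automorphisms of 𝔻). -/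
/-!
Write `c n` for the Taylor coefficients of `η` at `0` and `F n = ∮_{|z|=1} zⁿ η(z) dz` for its
moments on the unit circle, so that `c n = F (-n-1) / (2πi)`. Cauchy's theorem kills `F n` for
`n ≥ 0`. On the circle `z̄ = z⁻¹`, so the boundary condition `η(z) = r i z` with `r` real turns
conjugation into the reflection `F (-n-4) = conj (F n)`. Hence `c n = 0` for `n ≥ 3`,
`c 2 = -conj (c 0)` and `c 1 = -conj (c 1)` is imaginary, and `η` is the quadratic polynomial
`c 0 + c 1 z + c 2 z²` on the closed disc.
-/

open Metric Complex Set Finset Real ComplexConjugate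

noncomputable def circleMoment (f : ℂ → ℂ) (n : ℤ) : ℂ :=
  ∮ z in C(0, 1), z ^ n * f z

theorem cauchyPowerSeries_coeff_eq_circleMoment (f : ℂ → ℂ) (n : ℕ) :
    (cauchyPowerSeries f 0 1).coeff n = (2 * π * I)⁻¹ * circleMoment f (-(n + 1)) := by
  change cauchyPowerSeries f 0 1 n (fun _ => 1) = _
  rw [cauchyPowerSeries_apply, circleMoment, smul_eq_mul]
  congr 1
  refine circleIntegral.integral_congr zero_le_one fun z hz => ?_
  have hz0 : z ≠ 0 := by rintro rfl; simp at hz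
  simp only [sub_zero, smul_eq_mul, zpow_neg, ← zpow_natCast, one_div]
  rw [zpow_add_one₀ hz0, mul_inv, inv_zpow]
  ring

theorem circleMoment_natCast_eq_zero {f : ℂ → ℂ} (hf : DiffContOnCl ℂ f (ball 0 1)) (n : ℕ) :
    circleMoment f n = 0 := by
  simp only [circleMoment, zpow_natCast]
  exact circleIntegral_eq_zero_of_differentiable_on_off_countable zero_le_one countable_empty
    ((continuousOn_pow n).mul hf.continuousOn_ball)
    fun z hz => (differentiableAt_pow n).mul (hf.differentiableAt isOpen_ball hz.1)

theorem circleMoment_neg_sub_four {f : ℂ → ℂ}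
    (hf : ∀ z : ℂ, ‖z‖ = 1 → ∃ r : ℝ, f z = r * (I * z)) (n : ℤ) :
    circleMoment f (-n - 4) = conj (circleMoment f n) := by
  rw [circleMoment, circleMoment, circleIntegral, circleIntegral,
    ← intervalIntegral.intervalIntegral_conj]
  refine intervalIntegral.integral_congr fun θ _ => ?_
  simp only [deriv_circleMap, smul_eq_mul]
  set z := circleMap 0 1 θ
  have hz : ‖z‖ = 1 := by simp [z]
  have hz0 : z ≠ 0 := circleMap_ne_center one_ne_zero
  obtain ⟨r, hr⟩ := hf z hz
  simp only [hr, map_mul, map_zpow₀, conj_I, conj_ofReal,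
    ← inv_eq_conj hz, inv_zpow, zpow_sub₀ hz0, zpow_neg]
  field_simp

theorem cauchyPowerSeries_coeff_two_sub {f : ℂ → ℂ}
    (hf : ∀ z : ℂ, ‖z‖ = 1 → ∃ r : ℝ, f z = r * (I * z)) {m : ℕ} (hm : m ≤ 2) :
    (cauchyPowerSeries f 0 1).coeff (2 - m) = -conj ((cauchyPowerSeries f 0 1).coeff m) := by
  have hconj : conj (2 * π * I : ℂ)⁻¹ = -(2 * π * I : ℂ)⁻¹ := by
    simp [map_inv₀, conj_ofReal, conj_I, map_ofNat]
  have hidx : -(((2 - m : ℕ) : ℤ) + 1) = -(-(m + 1 : ℤ)) - 4 := by omega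
  rw [cauchyPowerSeries_coeff_eq_circleMoment, cauchyPowerSeries_coeff_eq_circleMoment, hidx,
    circleMoment_neg_sub_four hf, map_mul, hconj, neg_mul, neg_neg]

theorem cauchyPowerSeries_coeff_eq_zero_of_three_le {f : ℂ → ℂ}
    (hf : ∀ z : ℂ, ‖z‖ = 1 → ∃ r : ℝ, f z = r * (I * z)) (hd : DiffContOnCl ℂ f (ball 0 1))
    {n : ℕ} (hn : 3 ≤ n) :
    (cauchyPowerSeries f 0 1).coeff n = 0 := by
  have hidx : -((n : ℤ) + 1) = -((n - 3 : ℕ) : ℤ) - 4 := by omega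
  rw [cauchyPowerSeries_coeff_eq_circleMoment, hidx, circleMoment_neg_sub_four hf,
    circleMoment_natCast_eq_zero hd, map_zero, mul_zero]

theorem DiffContOnCl.eqOn_closedBall_sum_cauchyPowerSeries_coeff {E : Type*}
    [NormedAddCommGroup E] [NormedSpace ℂ E] [CompleteSpace E] {f : ℂ → E} {c : ℂ} {R : NNReal}
    (hf : DiffContOnCl ℂ f (ball c R)) (hR : 0 < R) {N : ℕ}
    (hN : ∀ n, N ≤ n → (cauchyPowerSeries f c R).coeff n = 0) :
    EqOn f (fun z => ∑ n ∈ range N, (z - c) ^ n • (cauchyPowerSeries f c R).coeff n)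
      (closedBall c R) := by
  have hp : HasFiniteFPowerSeriesOnBall f (cauchyPowerSeries f c R) c N R :=
    ⟨hf.hasFPowerSeriesOnBall hR, fun n hn => FormalMultilinearSeries.coeff_eq_zero.mp (hN n hn)⟩
  have hball : EqOn f (fun z => ∑ n ∈ range N, (z - c) ^ n • (cauchyPowerSeries f c R).coeff n)
      (ball c R) := fun z hz => by
    simp only [hp.eq_partialSum' z (by simpa using hz) N le_rfl,
      FormalMultilinearSeries.partialSum, FormalMultilinearSeries.apply_eq_pow_smul_coeff]
  rw [← closure_ball c (NNReal.coe_ne_zero.mpr hR.ne')]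
  exact hball.of_subset_closure hf.continuousOn (by fun_prop) subset_closure le_rfl

theorem eq_ofReal_mul_I_mul_of_norm_eq_one {z : ℂ} (hz : ‖z‖ = 1) (a : ℂ) (b : ℝ) :
    a + I * b * z - conj a * z ^ 2 = ((b + 2 * (a * conj z).im : ℝ) : ℂ) * (I * z) := by
  have hzz : z * conj z = 1 := by
    rw [← inv_eq_conj hz, mul_inv_cancel₀ (norm_ne_zero_iff.mp (by simp [hz]))]
  have him := sub_conj (a * conj z)
  rw [map_mul, conj_conj] at him
  push_cast at him ⊢
  linear_combination z * him - a * hzz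

/-- Characterisation of infinitesimal automorphisms of the disc: a function `η`
continuous on the closed unit disc and holomorphic on the open unit disc satisfies the
totally real boundary condition `η(z) ∈ ℝ·(iz)` for `|z| = 1` if and only if it is of
the form `η(z) = a + i b z − ā z²` with `a ∈ ℂ`, `b ∈ ℝ`; these are precisely the
infinitesimal holomorphic automorphisms of the disc, forming a `3`-dimensional real
vector space. -/
theorem infinitesimal_automorphisms_of_disc (η : ℂ → ℂ)
    (hcont : ContinuousOn η (closedBall (0 : ℂ) 1))
    (hhol : DifferentiableOn ℂ η (ball (0 : ℂ) 1)) :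
    (∀ z : ℂ, ‖z‖ = 1 → ∃ r : ℝ, η z = (r : ℂ) * (Complex.I * z)) ↔
    (∃ (a : ℂ) (b : ℝ), ∀ z ∈ closedBall (0 : ℂ) 1,
      η z = a + Complex.I * (b : ℂ) * z - (starRingEnd ℂ) a * z ^ 2) := by
  constructor
  · intro hb
    have hd : DiffContOnCl ℂ η (ball 0 1) := ⟨hhol, by rwa [closure_ball 0 one_ne_zero]⟩
    set c := (cauchyPowerSeries η 0 1).coeff
    have hc2 : c 2 = -conj (c 0) := cauchyPowerSeries_coeff_two_sub hb (m := 0) (by norm_num)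
    have hc1 : c 1 = I * (c 1).im := by
      have h := congrArg re (cauchyPowerSeries_coeff_two_sub hb (m := 1) (by norm_num))
      exact Complex.ext (by simp at h ⊢; linarith) (by simp)
    refine ⟨c 0, (c 1).im, fun z hz => ?_⟩
    have hpoly := hd.eqOn_closedBall_sum_cauchyPowerSeries_coeff one_pos (N := 3)
      fun n hn => cauchyPowerSeries_coeff_eq_zero_of_three_le hb hd hn
    rw [hpoly (by simpa using hz)]
    simp only [NNReal.coe_one, sum_range_succ, sum_range_zero, sub_zero, smul_eq_mul]
    linear_combination z * hc1 + z ^ 2 * hc2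
  · rintro ⟨a, b, h⟩ z hz
    exact ⟨_, (h z (by simp [hz])).trans (eq_ofReal_mul_I_mul_of_norm_eq_one hz a b)⟩
end

section
/- Vanishing lemma for holomorphic functions with one-sided boundary imaginary part: let f : ℂ → ℂ be continuous on the closed unit disc 𝔻 and holomorphic on the open unit disc, and suppose Im f(z) ≥ 0 for every z with |z| = 1. If f(z₀) = 0 for some z₀ with |z₀| < 1, then f vanishes identically on 𝔻. -/
/-!
Since `Im f ≥ 0` on the boundary, `‖exp (i f)‖ = exp (-Im f) ≤ 1` there, hence on the whole closed
disc by the maximum modulus principle. At `z₀` this bound is attained, so `‖exp (i f)‖` is constant,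
i.e. `Im f` vanishes on the open disc. A holomorphic function with constant imaginary part on a
connected open set is constant (open mapping theorem), and continuity carries `f = f z₀ = 0` to the
closed disc.
-/

open Metric Complex Set Function Bornology

namespace Complex

theorem norm_exp_I_mul (w : ℂ) : ‖exp (I * w)‖ = Real.exp (-w.im) := by
  simp [norm_exp]

theorem im_eqOn_zero_of_forall_mem_frontier_im_nonneg {E : Type*} [NormedAddCommGroup E]
    [NormedSpace ℂ E] [Nontrivial E] {f : E → ℂ} {U : Set E} {c : E} (hb : IsBounded U)
    (hc : IsPreconnected U) (ho : IsOpen U) (hd : DiffContOnCl ℂ f U)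
    (hfr : ∀ z ∈ frontier U, 0 ≤ (f z).im) (hcU : c ∈ U) (hfc : (f c).im = 0) :
    EqOn (im ∘ f) 0 U := by
  set g : E → ℂ := fun z ↦ exp (I * f z)
  have hg : DiffContOnCl ℂ g U := differentiable_exp.comp_diffContOnCl (hd.const_smul I)
  have hg_le : ∀ z ∈ closure U, ‖g z‖ ≤ 1 :=
    fun z ↦ norm_le_of_forall_mem_frontier_norm_le hb hg fun w hw ↦ by
      simpa [g, norm_exp_I_mul] using hfr w hw
  have hmax : IsMaxOn (norm ∘ g) U c := fun z hz ↦ by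
    simpa [g, norm_exp_I_mul, hfc] using hg_le z (subset_closure hz)
  intro z hz
  have := norm_eqOn_of_isPreconnected_of_isMaxOn hc ho hg.differentiableOn hcU hmax hz
  simpa [g, norm_exp_I_mul, hfc] using this

theorem eqOn_closure_of_forall_mem_frontier_im_nonneg {f : ℂ → ℂ} {U : Set ℂ} {c : ℂ}
    (hb : IsBounded U) (hc : IsPreconnected U) (ho : IsOpen U) (hd : DiffContOnCl ℂ f U)
    (hfr : ∀ z ∈ frontier U, 0 ≤ (f z).im) (hcU : c ∈ U) (hfc : (f c).im = 0) :
    EqOn f (const ℂ (f c)) (closure U) := by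
  have him : ∀ z ∈ U, (f z).im = 0 :=
    im_eqOn_zero_of_forall_mem_frontier_im_nonneg hb hc ho hd hfr hcU hfc
  obtain ⟨a, ha⟩ := (hd.differentiableOn.analyticOnNhd ho).eq_const_of_im_eq_const him ho
    ⟨⟨c, hcU⟩, hc⟩
  have hU : EqOn f (const ℂ (f c)) U := fun z hz ↦ by simp [ha z hz, ha c hcU]
  exact hU.of_subset_closure hd.continuousOn continuousOn_const subset_closure subset_rfl

end Complex

/-- Vanishing lemma: if `f` is continuous on the closed unit disc, holomorphic on the
open unit disc, has nonnegative imaginary part on the unit circle, and vanishes at some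
interior point, then `f` vanishes identically on the closed unit disc. -/
theorem vanishing_of_holomorphic_with_one_sided_boundary (f : ℂ → ℂ)
    (hcont : ContinuousOn f (closedBall (0 : ℂ) 1))
    (hhol : DifferentiableOn ℂ f (ball (0 : ℂ) 1))
    (hbdry : ∀ z : ℂ, ‖z‖ = 1 → 0 ≤ (f z).im)
    (z₀ : ℂ) (hz₀ : ‖z₀‖ < 1) (hf0 : f z₀ = 0) :
    ∀ z ∈ closedBall (0 : ℂ) 1, f z = 0 := by
  have hd : DiffContOnCl ℂ f (ball 0 1) := ⟨hhol, by rwa [closure_ball 0 one_ne_zero]⟩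
  have hfr : ∀ z ∈ frontier (ball (0 : ℂ) 1), 0 ≤ (f z).im := fun z hz ↦
    hbdry z (by rwa [frontier_ball 0 one_ne_zero, mem_sphere_zero_iff_norm] at hz)
  intro z hz
  rw [← closure_ball (0 : ℂ) one_ne_zero] at hz
  simpa [hf0] using eqOn_closure_of_forall_mem_frontier_im_nonneg isBounded_ball
    (convex_ball 0 1).isPreconnected isOpen_ball hd hfr (mem_ball_zero_iff.2 hz₀) (by simp [hf0]) hz
end
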